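/- arXiv:1610.00636 — 7 statements merged into one kernel-verified Lean document; each statement's English description precedes it below -/
import Mathlib

section
/- If G is a non-complete, double-critical, t-chromatic graph, then for any vertex x that has at least one non-neighbor in G, the chromatic number of the subgraph of G induced on the vertices outside the closed neighborhood of x is at least 3. -/
/-!
Let `A` be the set of non-neighbours of `x` and suppose `G[A]` is 2-colourable. Take an edge `ab`
touching `A` (inside `A` if `A` is not independent, otherwise from some vertex of `A` to `N(x)`,
which exists by connectivity) and a `(t - 2)`-colouring of `G - {a, b}`. Every neighbour of a
vertex of `A` outside `A` lies in `N(x)`, so one independent part of `A` can take the colour of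
`x`, while the remaining independent set (the other part of `A`, or the vertex `b ∈ N(x)`) gets
one new colour. This colours `G` with `t - 1` colours, a contradiction.
-/

open SimpleGraph

def DoubleCritical {V : Type*} (G : SimpleGraph V) (t : ℕ) : Prop :=
  G.Connected ∧ G.chromaticNumber = (t : ℕ∞) ∧
    ∀ x y : V, G.Adj x y →
      (G.induce ({x, y}ᶜ : Set V)).chromaticNumber = (t : ℕ∞) - 2

def ClawFree {V : Type*} (G : SimpleGraph V) : Prop :=
  ∀ x a b c : V, a ≠ b → a ≠ c → b ≠ c →
    G.Adj x a → G.Adj x b → G.Adj x c →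
    G.Adj a b ∨ G.Adj a c ∨ G.Adj b c

namespace SimpleGraph

variable {V : Type*} {G : SimpleGraph V}

def closedNeighborSet (G : SimpleGraph V) (x : V) : Set V := insert x (G.neighborSet x)

theorem Colorable.succ_of_isIndepSet {I : Set V} {k : ℕ} (hI : G.IsIndepSet I)
    (hk : (G.induce Iᶜ).Colorable k) : G.Colorable (k + 1) := by
  classical
  obtain ⟨c⟩ := hk
  let C : G.Coloring (Option (Fin k)) :=
    Coloring.mk (fun v => if hv : v ∈ I then none else some (c ⟨v, hv⟩)) fun {u v} huv => by
      by_cases hu : u ∈ I <;> by_cases hv : v ∈ I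
      · exact absurd huv (hI hu hv (G.ne_of_adj huv))
      all_goals simp only [hu, hv, dite_true, dite_false, ne_eq, reduceCtorEq, not_false_eq_true,
        Option.some.injEq]
      exact c.valid huv
  simpa using C.colorable

/-- Extend the colouring by giving the non-neighbours of `x` the colour of `x`. -/
theorem colorable_induce_of_isIndepSet_diff_closedNeighborSet {x : V} {S : Set V} {k : ℕ}
    (hxS : x ∈ S) (hS : G.IsIndepSet (S \ G.closedNeighborSet x))
    (hk : (G.induce (S ∩ G.closedNeighborSet x)).Colorable k) : (G.induce S).Colorable k := by
  classical
  obtain ⟨c⟩ := hk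
  have hx : x ∈ S ∩ G.closedNeighborSet x := ⟨hxS, Set.mem_insert x _⟩
  let col : S → Fin k := fun v =>
    if hv : (v : V) ∈ G.closedNeighborSet x then c ⟨v, v.2, hv⟩ else c ⟨x, hx⟩
  have mixed : ∀ u v : S, (u : V) ∉ G.closedNeighborSet x →
      (v : V) ∈ G.closedNeighborSet x → G.Adj u v → col u ≠ col v := by
    intro u v hu hv huv
    have hvx : (v : V) ∈ G.neighborSet x := by
      refine (Set.mem_insert_iff.mp hv).resolve_left ?_
      rintro hvx
      exact hu (Set.mem_insert_of_mem _ (hvx ▸ huv.symm))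
    simp only [col, hu, hv, dite_true, dite_false]
    exact c.valid (v := ⟨x, hx⟩) (w := ⟨v, v.2, hv⟩) hvx
  refine ⟨Coloring.mk col fun {u v} huv => ?_⟩
  by_cases hu : (u : V) ∈ G.closedNeighborSet x <;>
    by_cases hv : (v : V) ∈ G.closedNeighborSet x
  · simp only [col, hu, hv, dite_true]
    exact c.valid (v := ⟨u, u.2, hu⟩) (w := ⟨v, v.2, hv⟩) huv
  · exact (mixed v u hv hu huv.symm).symm
  · exact mixed u v hu hv huv
  · exact absurd huv (hS ⟨u.2, hu⟩ ⟨v.2, hv⟩ ((G.induce S).ne_of_adj huv ∘ Subtype.ext))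

theorem isIndepSet_image_val_colorClass {s : Set V} {α : Type*} (C : (G.induce s).Coloring α)
    (i : α) : G.IsIndepSet (Subtype.val '' C.colorClass i) := by
  rintro _ ⟨u, hu, rfl⟩ _ ⟨v, hv, rfl⟩ - huv
  exact C.not_adj_of_mem_colorClass hu hv huv

end SimpleGraph

namespace DoubleCritical

variable {V : Type*} {G : SimpleGraph V} {t : ℕ} {a b : V}

theorem colorable_induce_compl_pair (hG : DoubleCritical G t) (hab : G.Adj a b) :
    (G.induce ({a, b}ᶜ : Set V)).Colorable (t - 2) := by
  rw [← chromaticNumber_le_iff_colorable, hG.2.2 a b hab, ENat.natCast_sub]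
  rfl

theorem not_colorable_sub_two_add_one (hG : DoubleCritical G t) (hab : G.Adj a b) :
    ¬ G.Colorable (t - 2 + 1) := by
  intro h
  have h2 : 2 ≤ t := by exact_mod_cast hG.2.1 ▸ two_le_chromaticNumber_of_adj hab
  have ht := hG.2.1 ▸ chromaticNumber_le_iff_colorable.mpr h
  norm_cast at ht
  omega

theorem not_isIndepSet_compl_diff_closedNeighborSet (hG : DoubleCritical G t) (hab : G.Adj a b)
    {x : V} {I : Set V} (hI : G.IsIndepSet I) (hxI : x ∉ I)
    (hsub : Iᶜ ∩ G.closedNeighborSet x ⊆ {a, b}ᶜ) :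
    ¬ G.IsIndepSet (Iᶜ \ G.closedNeighborSet x) := fun hindep =>
  hG.not_colorable_sub_two_add_one hab <| Colorable.succ_of_isIndepSet hI <|
    colorable_induce_of_isIndepSet_diff_closedNeighborSet hxI hindep <|
      (hG.colorable_induce_compl_pair hab).of_hom (G.induceHomOfLE hsub).toHom

end DoubleCritical

theorem stmt_1_general {V : Type*} (G : SimpleGraph V) (t : ℕ)
    (hG : DoubleCritical G t)
    (x : V) (hx : ∃ y : V, y ≠ x ∧ ¬ G.Adj x y) :
    3 ≤ (G.induce ((insert x (G.neighborSet x))ᶜ : Set V)).chromaticNumber := by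
  change 3 ≤ (G.induce (G.closedNeighborSet x)ᶜ).chromaticNumber
  set A := (G.closedNeighborSet x)ᶜ
  obtain ⟨y, hyx, hxy⟩ := hx
  have hyA : y ∉ G.closedNeighborSet x := by
    simp [closedNeighborSet, hyx, hxy]
  have hxA : x ∉ A := fun h => h (Set.mem_insert x _)
  by_contra! h3
  obtain ⟨f⟩ := chromaticNumber_le_iff_colorable.mp (Order.le_of_lt_add_one h3)
  by_cases hAindep : G.IsIndepSet A
  · obtain ⟨b, hyb⟩ :=
      (G.mem_support).mp (mem_support_of_reachable hyx (hG.1.preconnected y x))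
    have hbx : b ≠ x := by rintro rfl; exact hxy hyb.symm
    refine hG.not_isIndepSet_compl_diff_closedNeighborSet hyb (I := {b})
      (Set.pairwise_singleton _ _) (Ne.symm hbx) ?_ (hAindep.mono (Set.sdiff_subset_compl _ _))
    rintro v ⟨hvb, hvN⟩ (rfl | rfl)
    exacts [hyA hvN, hvb rfl]
  · obtain ⟨a, ha, b, hb, -, hab⟩ : ∃ a ∈ A, ∃ b ∈ A, a ≠ b ∧ G.Adj a b := by
      simpa [Set.Pairwise] using hAindep
    refine hG.not_isIndepSet_compl_diff_closedNeighborSet hab (x := x)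
      (isIndepSet_image_val_colorClass f 0) (fun ⟨v, _, hv⟩ => hxA (hv ▸ v.2)) ?_
      ((isIndepSet_image_val_colorClass f 1).mono ?_)
    · rintro v ⟨-, hvN⟩ (rfl | rfl)
      exacts [ha hvN, hb hvN]
    · rintro v ⟨hvI, hvA⟩
      exact ⟨⟨v, hvA⟩, Fin.eq_one_of_ne_zero _ fun h0 => hvI ⟨_, h0, rfl⟩, rfl⟩

theorem stmt_1 {V : Type*} (G : SimpleGraph V) (t : ℕ)
    (hG : DoubleCritical G t) (hnc : G ≠ ⊤)
    (x : V) (hx : ∃ y : V, y ≠ x ∧ ¬ G.Adj x y) :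
    3 ≤ (G.induce ((insert x (G.neighborSet x))ᶜ : Set V)).chromaticNumber :=
  stmt_1_general G t hG x hx
end

section
/- If G is a non-complete, double-critical, t-chromatic graph, then for any vertex x with at least one non-neighbor in G, the subgraph of G induced on V(G) \ N[x] contains an odd cycle, and consequently the degree of x is at most |V(G)| - 4. -/
open SimpleGraph

/-!
Let `A = V \ N[x]`. If `G[A]` were bipartite with sides `I` and `J`, then `G` would be
`(t - 1)`-colourable: take an edge `uv` inside `A` (or, when `A` is independent, an edge `yz`
from `A` into `N(x)`, and put `I = A`, `J = {z}`), colour `G - u - v` with `t - 2` colours,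
give all of `I` the colour of `x` and all of `J` one new colour. Hence `G[A]` contains an odd
cycle, so `|A| ≥ 3` and `deg x = |V| - |A| - 1 ≤ |V| - 4`.
-/

namespace SimpleGraph

variable {V : Type*} {G : SimpleGraph V}

namespace Walk

lemma exists_eq_append_loop_of_not_nodup_support [DecidableEq V] {u v : V} (p : G.Walk u v)
    (hp : ¬ p.support.Nodup) :
    ∃ (w : V) (q : G.Walk u w) (c : G.Walk w w) (r : G.Walk w v),
      0 < c.length ∧ p = q.append (c.append r) := by
  induction p with
  | nil => simp at hp
  | @cons a b _ h rest ih =>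
    by_cases ha : a ∈ rest.support
    · refine ⟨a, nil, cons h (rest.takeUntil a ha), rest.dropUntil a ha, by simp, ?_⟩
      simp [rest.take_spec ha]
    · obtain ⟨w, q, c, r, hc, rfl⟩ := ih (by simp_all)
      exact ⟨w, cons h q, c, r, hc, rfl⟩

lemma exists_isCycle_odd_of_odd_length {u : V} (p : G.Walk u u) (hp : Odd p.length) :
    ∃ (v : V) (c : G.Walk v v), c.IsCycle ∧ Odd c.length := by
  classical
  induction hn : p.length using Nat.strong_induction_on generalizing u with
  | _ n ih =>
    cases p with
    | nil => simp at hp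
    | @cons _ v _ h rest =>
      by_cases hrest : rest.IsPath
      · refine ⟨u, cons h rest, isCycle_iff_isPath_tail_and_le_length.mpr ⟨by simpa, ?_⟩, hp⟩
        have : rest.length ≠ 0 := fun h0 => h.ne (rest.eq_of_length_eq_zero h0).symm
        rw [length_cons] at hp ⊢
        rcases hp with ⟨k, hk⟩
        omega
      · obtain ⟨w, q, c, r, hc, rfl⟩ :=
          exists_eq_append_loop_of_not_nodup_support rest (mt (isPath_def rest).mpr hrest)
        simp only [length_cons, length_append] at hn hp
        rcases Nat.even_or_odd c.length with hev | hodd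
        · refine ih ((q.append r).length + 1) (by simp only [length_append]; omega)
            (cons h (q.append r)) ?_ rfl
          simp only [length_cons, length_append]
          grind
        · exact ih _ (by omega) c hodd rfl

lemma IsCycle.length_le_natCard [Finite V] {v : V} {c : G.Walk v v} (hc : c.IsCycle) :
    c.length ≤ Nat.card V := by
  have := Fintype.ofFinite V
  simpa [Nat.card_eq_fintype_card] using hc.support_nodup.length_le_card

end Walk

lemma exists_isCycle_odd_of_not_colorable_two (h : ¬ G.Colorable 2) :
    ∃ (v : V) (c : G.Walk v v), c.IsCycle ∧ Odd c.length := by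
  obtain ⟨u, p, hp⟩ : ∃ (u : V) (p : G.Walk u u), Odd p.length := by
    simpa [two_colorable_iff_forall_loop_even, ← Nat.not_odd_iff_even] using h
  exact p.exists_isCycle_odd_of_odd_length hp

lemma exists_isIndepSet_union_eq_of_colorable_induce_two {s : Set V}
    (h : (G.induce s).Colorable 2) :
    ∃ I J : Set V, G.IsIndepSet I ∧ G.IsIndepSet J ∧ I ∪ J = s := by
  obtain ⟨C⟩ := h
  have hindep : ∀ i, G.IsIndepSet {w | ∃ hw : w ∈ s, C ⟨w, hw⟩ = i} := by
    rintro i a ⟨ha, rfl⟩ b ⟨hb, hCb⟩ - hab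
    exact C.valid (show (G.induce s).Adj ⟨a, ha⟩ ⟨b, hb⟩ from hab) hCb.symm
  refine ⟨_, _, hindep 0, hindep 1, Set.ext fun w => ⟨?_, fun hw => ?_⟩⟩
  · rintro (⟨hw, -⟩ | ⟨hw, -⟩) <;> exact hw
  · rcases Fin.exists_fin_two.mp ⟨C ⟨w, hw⟩, rfl⟩ with h | h
    exacts [.inl ⟨hw, h⟩, .inr ⟨hw, h⟩]

/-- `I` joins the colour class of `x` (its neighbours outside `I ∪ J` all lie in `N(x)`) and `J`
becomes one new colour class. -/
lemma colorable_succ_of_colorable_induce_compl_union {x : V} {I J : Set V} {k : ℕ}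
    (hI : G.IsIndepSet I) (hJ : G.IsIndepSet J)
    (hIA : I ⊆ (insert x (G.neighborSet x))ᶜ) (hAIJ : (insert x (G.neighborSet x))ᶜ ⊆ I ∪ J)
    (hxJ : x ∉ J) (hcol : (G.induce (I ∪ J)ᶜ).Colorable k) :
    G.Colorable (k + 1) := by
  classical
  obtain ⟨C⟩ := hcol
  have hxI : x ∉ I := fun hx => hIA hx (Set.mem_insert x _)
  have hx : x ∈ (I ∪ J)ᶜ := by simp [hxI, hxJ]
  have hnbr : ∀ w, w ∉ I ∪ J → w ≠ x → G.Adj x w := fun w hw hwx => by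
    by_contra hadj
    exact hw (hAIJ (by simp [hwx, hadj]))
  let f : V → Option (Fin k) := fun w =>
    if w ∈ I then some (C ⟨x, hx⟩) else if hw : w ∈ I ∪ J then none else some (C ⟨w, hw⟩)
  have hI_out : ∀ a b (hb : b ∉ I ∪ J), a ∈ I → G.Adj a b → C ⟨x, hx⟩ ≠ C ⟨b, hb⟩ := by
    intro a b hb ha hab
    have hbx : b ≠ x := by
      rintro rfl
      exact hIA ha (Set.mem_insert_of_mem _ hab.symm)
    exact C.valid (hnbr b hb hbx)
  refine (Coloring.mk f fun {a b} hab => ?_).colorable.mono (by simp)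
  simp only [f]
  split_ifs with haI hbI hbIJ haIJ hbI hbIJ hbI hbIJ
  · exact absurd hab (hI haI hbI hab.ne)
  · exact Option.some_ne_none _
  · exact fun h => hI_out a b hbIJ haI hab (Option.some_injective _ h)
  · exact (Option.some_ne_none _).symm
  · exact absurd hab (hJ (haIJ.resolve_left haI) (hbIJ.resolve_left hbI) hab.ne)
  · exact (Option.some_ne_none _).symm
  · exact fun h => hI_out b a haIJ hbI hab.symm (Option.some_injective _ h).symm
  · exact Option.some_ne_none _
  · exact fun h => C.valid (show (G.induce (I ∪ J)ᶜ).Adj ⟨a, haIJ⟩ ⟨b, hbIJ⟩ from hab)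
      (Option.some_injective _ h)

lemma ncard_compl_insert_neighborSet_add [Fintype V] [DecidableRel G.Adj] (x : V) :
    ((insert x (G.neighborSet x))ᶜ : Set V).ncard + (G.degree x + 1) = Fintype.card V := by
  have hdeg : (G.neighborSet x).ncard = G.degree x := by
    rw [← Nat.card_coe_set_eq, Nat.card_eq_fintype_card, card_neighborSet_eq_degree]
  rw [← Nat.card_eq_fintype_card, ← Set.ncard_add_ncard_compl (insert x (G.neighborSet x)),
    Set.ncard_insert_of_notMem G.notMem_neighborSet_self, hdeg, add_comm]

end SimpleGraph

namespace DoubleCritical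

variable {V : Type*} {G : SimpleGraph V} {t : ℕ}

lemma le_of_colorable (hG : DoubleCritical G t) {k : ℕ} (h : G.Colorable k) : t ≤ k := by
  have := h.chromaticNumber_le
  rwa [hG.2.1, Nat.cast_le] at this

lemma two_le (hG : DoubleCritical G t) {u v : V} (huv : G.Adj u v) : 2 ≤ t := by
  have := two_le_chromaticNumber_of_adj huv
  rw [hG.2.1] at this
  exact_mod_cast this

lemma colorable_induce_compl (hG : DoubleCritical G t) {u v : V} (huv : G.Adj u v) {s : Set V}
    (hu : u ∈ s) (hv : v ∈ s) : (G.induce sᶜ).Colorable (t - 2) := by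
  have h : (G.induce ({u, v}ᶜ : Set V)).Colorable (t - 2) := by
    rw [← chromaticNumber_le_iff_colorable, hG.2.2 u v huv, ENat.natCast_sub]
    rfl
  refine h.of_hom (induceHomOfLE G ?_).toHom
  rintro w hw (rfl | rfl)
  exacts [hw hu, hw hv]

lemma not_colorable_two_induce_compl_insert_neighborSet (hG : DoubleCritical G t) {x y : V}
    (hyx : y ≠ x) (hxy : ¬ G.Adj x y) :
    ¬ (G.induce (insert x (G.neighborSet x))ᶜ).Colorable 2 := by
  set A : Set V := (insert x (G.neighborSet x))ᶜ with hA
  have hyA : y ∈ A := by simp [hA, hyx, hxy]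
  intro h2
  suffices ∃ I J : Set V, G.IsIndepSet I ∧ G.IsIndepSet J ∧ I ⊆ A ∧ A ⊆ I ∪ J ∧ x ∉ J ∧
      ∃ u v, G.Adj u v ∧ u ∈ I ∪ J ∧ v ∈ I ∪ J by
    obtain ⟨I, J, hI, hJ, hIA, hAIJ, hxJ, u, v, huv, hu, hv⟩ := this
    have := hG.le_of_colorable (colorable_succ_of_colorable_induce_compl_union hI hJ hIA hAIJ hxJ
      (hG.colorable_induce_compl huv hu hv))
    have := hG.two_le huv
    omega
  by_cases hAindep : G.IsIndepSet A
  · obtain ⟨z, hyz⟩ : ∃ z, G.Adj y z :=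
      ⟨_, (hG.1.preconnected y x).some.adj_snd (Walk.not_nil_of_ne hyx)⟩
    have hzx : z ≠ x := by
      rintro rfl
      exact hxy hyz.symm
    exact ⟨A, {z}, hAindep, Set.pairwise_singleton _ _, subset_rfl, Set.subset_union_left,
      hzx.symm, y, z, hyz, .inl hyA, .inr rfl⟩
  · obtain ⟨I, J, hI, hJ, hIJ⟩ := exists_isIndepSet_union_eq_of_colorable_induce_two h2
    obtain ⟨u, hu, v, hv, -, huv⟩ : ∃ u ∈ A, ∃ v ∈ A, u ≠ v ∧ G.Adj u v := by
      simpa [IsIndepSet, Set.Pairwise] using hAindep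
    refine ⟨I, J, hI, hJ, hIJ ▸ Set.subset_union_left, hIJ.ge, fun hxJ => ?_, u, v, huv,
      hIJ ▸ hu, hIJ ▸ hv⟩
    exact (hIJ ▸ Set.subset_union_right : J ⊆ A) hxJ (Set.mem_insert x _)

end DoubleCritical

theorem stmt_2_general {V : Type*} [Fintype V] (G : SimpleGraph V) [DecidableRel G.Adj] (t : ℕ)
    (hG : DoubleCritical G t)
    (x : V) (hx : ∃ y : V, y ≠ x ∧ ¬ G.Adj x y) :
    (∃ (v : ((insert x (G.neighborSet x))ᶜ : Set V))
       (c : (G.induce ((insert x (G.neighborSet x))ᶜ : Set V)).Walk v v),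
         c.IsCycle ∧ Odd c.length) ∧
    G.degree x ≤ Fintype.card V - 4 := by
  obtain ⟨y, hyx, hxy⟩ := hx
  obtain ⟨v, c, hc, hodd⟩ := exists_isCycle_odd_of_not_colorable_two
    (hG.not_colorable_two_induce_compl_insert_neighborSet hyx hxy)
  refine ⟨⟨v, c, hc, hodd⟩, ?_⟩
  have hA : 3 ≤ ((insert x (G.neighborSet x))ᶜ : Set V).ncard :=
    hc.three_le_length.trans hc.length_le_natCard
  have := ncard_compl_insert_neighborSet_add (G := G) x
  omega

theorem stmt_2 {V : Type*} [Fintype V] (G : SimpleGraph V) [DecidableRel G.Adj] (t : ℕ)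
    (hG : DoubleCritical G t) (hnc : G ≠ ⊤)
    (x : V) (hx : ∃ y : V, y ≠ x ∧ ¬ G.Adj x y) :
    (∃ (v : ((insert x (G.neighborSet x))ᶜ : Set V))
       (c : (G.induce ((insert x (G.neighborSet x))ᶜ : Set V)).Walk v v),
         c.IsCycle ∧ Odd c.length) ∧
    G.degree x ≤ Fintype.card V - 4 :=
  stmt_2_general G t hG x hx
end

section
/- Let G be a double-critical t-chromatic graph, let xy be an edge of G, and let c be a proper (t-2)-coloring of G \ {x,y} with color classes V_1, ..., V_{t-2}. For any distinct indices i, j, if every vertex in N(x) ∩ N(y) ∩ V_i is non-adjacent to every vertex in N(x) ∩ V_j, then there exists an edge of G between (N(y) \ N(x)) ∩ V_i and N(x) ∩ V_j; in particular (N(y) \ N(x)) ∩ V_i is nonempty. -/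
open SimpleGraph

/-!
If no vertex of `N(x) ∩ V_j` were adjacent to a vertex of `N(y) ∩ V_i`, we could give `x` the
colour `j`, give `y` the colour `i`, and move all of `N(x) ∩ V_j` and `N(y) ∩ V_i` to one fresh
colour: this is a proper `(t - 1)`-colouring of `G`. So such an edge `uv` exists, and by the
hypothesis on the common neighbours in `V_i`, its end `v ∈ V_i` is not adjacent to `x`.
-/
namespace SimpleGraph

variable {V α : Type*} {G : SimpleGraph V} {x y : V}
  (c : (G.induce ({x, y}ᶜ : Set V)).Coloring α) (i j : α)

open Classical in
/-- `none` is the fresh colour. -/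
noncomputable def recolorPair (v : V) : Option α :=
  if h : v ∈ ({x, y}ᶜ : Set V) then
    if (G.Adj x v ∧ c ⟨v, h⟩ = j) ∨ (G.Adj y v ∧ c ⟨v, h⟩ = i) then none else some (c ⟨v, h⟩)
  else if v = x then some j else some i

variable {c i j}

theorem recolorPair_adj_ne (hij : i ≠ j)
    (hno : ∀ u (hu : u ∈ ({x, y}ᶜ : Set V)) v (hv : v ∈ ({x, y}ᶜ : Set V)),
      G.Adj x u → c ⟨u, hu⟩ = j → G.Adj y v → c ⟨v, hv⟩ = i → ¬ G.Adj u v)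
    {u v : V} (huv : G.Adj u v) : recolorPair c i j u ≠ recolorPair c i j v := by
  have hc : ∀ hu hv, c ⟨u, hu⟩ ≠ c ⟨v, hv⟩ := fun hu hv => c.valid huv
  have := huv.ne
  unfold recolorPair
  -- the case `u ∈ N(x) ∩ V_j`, `v ∈ N(y) ∩ V_i` (both sent to `none`) is excluded by `hno`
  split_ifs <;> grind [G.adj_symm, G.loopless]

variable (c) in
theorem exists_adj_of_isEmpty_coloring_option (hχ : IsEmpty (G.Coloring (Option α)))
    (hij : i ≠ j) :
    ∃ u, ∃ hu : u ∈ ({x, y}ᶜ : Set V), ∃ v, ∃ hv : v ∈ ({x, y}ᶜ : Set V),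
      G.Adj x u ∧ c ⟨u, hu⟩ = j ∧ G.Adj y v ∧ c ⟨v, hv⟩ = i ∧ G.Adj u v := by
  by_contra! hno
  exact hχ.false ⟨recolorPair c i j, recolorPair_adj_ne hij hno⟩

end SimpleGraph

theorem stmt_3_general {V : Type*} (G : SimpleGraph V) (t : ℕ)
    (hG : DoubleCritical G t) (x y : V)
    (c : (G.induce (({x, y}ᶜ : Set V))).Coloring (Fin (t - 2)))
    (i j : Fin (t - 2)) (hij : i ≠ j)
    (hanti : ∀ a ∈ G.neighborSet x ∩ G.neighborSet y ∩
        {v : V | ∃ h : v ∈ ({x, y}ᶜ : Set V), c ⟨v, h⟩ = i},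
      ∀ b ∈ G.neighborSet x ∩ {v : V | ∃ h : v ∈ ({x, y}ᶜ : Set V), c ⟨v, h⟩ = j},
        ¬ G.Adj a b) :
    ∃ a ∈ (G.neighborSet y \ G.neighborSet x) ∩
        {v : V | ∃ h : v ∈ ({x, y}ᶜ : Set V), c ⟨v, h⟩ = i},
      ∃ b ∈ G.neighborSet x ∩ {v : V | ∃ h : v ∈ ({x, y}ᶜ : Set V), c ⟨v, h⟩ = j},
        G.Adj a b := by
  have hχ : IsEmpty (G.Coloring (Option (Fin (t - 2)))) := by
    refine ⟨fun f => ?_⟩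
    have hle := f.colorable.chromaticNumber_le
    rw [hG.2.1, Fintype.card_option, Fintype.card_fin] at hle
    have ht : t - 2 + 1 < t := by have := i.pos; omega
    exact absurd hle (mod_cast ht.not_ge)
  obtain ⟨u, hu, v, hv, hxu, hcu, hyv, hcv, huv⟩ :=
    exists_adj_of_isEmpty_coloring_option c hχ hij
  have hxv : ¬ G.Adj x v := fun hxv => hanti v ⟨⟨hxv, hyv⟩, hv, hcv⟩ u ⟨hxu, hu, hcu⟩ huv.symm
  exact ⟨v, ⟨⟨hyv, hxv⟩, hv, hcv⟩, u, ⟨hxu, hu, hcu⟩, huv.symm⟩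

theorem stmt_3 {V : Type*} (G : SimpleGraph V) (t : ℕ)
    (hG : DoubleCritical G t) (x y : V) (hxy : G.Adj x y)
    (c : (G.induce (({x, y}ᶜ : Set V))).Coloring (Fin (t - 2)))
    (i j : Fin (t - 2)) (hij : i ≠ j)
    (hanti : ∀ a ∈ G.neighborSet x ∩ G.neighborSet y ∩
        {v : V | ∃ h : v ∈ ({x, y}ᶜ : Set V), c ⟨v, h⟩ = i},
      ∀ b ∈ G.neighborSet x ∩ {v : V | ∃ h : v ∈ ({x, y}ᶜ : Set V), c ⟨v, h⟩ = j},
        ¬ G.Adj a b) :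
    ∃ a ∈ (G.neighborSet y \ G.neighborSet x) ∩
        {v : V | ∃ h : v ∈ ({x, y}ᶜ : Set V), c ⟨v, h⟩ = i},
      ∃ b ∈ G.neighborSet x ∩ {v : V | ∃ h : v ∈ ({x, y}ᶜ : Set V), c ⟨v, h⟩ = j},
        G.Adj a b :=
  stmt_3_general G t hG x y c i j hij hanti
end

section
/- If G is a double-critical t-chromatic claw-free graph with t ≥ 6, then every vertex of G has degree at most 2t - 4. Moreover, every vertex of degree less than |V(G)| - 1 has degree at most 2t - 6. -/
open SimpleGraph

/-!
Colour `G - {u, v}` with `t - 2` colours for an edge `uv` avoiding `x`. The neighbours of `x`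
outside `{u, v}` miss the colour of `x`, and by claw-freeness each colour class inside `N(x)` has
at most two vertices; hence `|N(x) \ {u, v}| ≤ 2(t - 3)`. Such an edge exists since `G` is not
bipartite, which gives `deg x ≤ 2t - 4`. If `x` has a non-neighbour `z`, then `N(z) ⊄ N(x)`:
otherwise colour `G - {y, z}` for a neighbour `y` of `z`, give `y` a new colour and `z` the colour
of `x`, a `(t - 1)`-colouring of `G`. So `z` has a neighbour `w ∉ N[x]`, and the edge `zw` misses
`N(x)` entirely, giving `deg x ≤ 2t - 6`.
-/

namespace SimpleGraph

variable {V : Type*} {G : SimpleGraph V} {S : Set V} {k : ℕ} {C : V → ℕ} {x y z : V}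

/-- A proper colouring of `G - S` with colours `0, …, k - 1`, extended arbitrarily to `S`. -/
def IsColoringOff (G : SimpleGraph V) (S : Set V) (k : ℕ) (C : V → ℕ) : Prop :=
  (∀ w ∉ S, C w < k) ∧ ∀ a b, G.Adj a b → a ∉ S → b ∉ S → C a ≠ C b

lemma exists_isColoringOff_of_colorable_induce (h : (G.induce Sᶜ).Colorable k) :
    ∃ C, G.IsColoringOff S k C := by
  classical
  obtain ⟨C₀, hC₀⟩ := (colorable_iff_exists_bdd_nat_coloring k).1 h
  refine ⟨fun w => if hw : w ∈ Sᶜ then C₀ ⟨w, hw⟩ else 0, fun w hw => ?_,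
    fun a b hab ha hb => ?_⟩
  · simpa [hw] using hC₀ ⟨w, hw⟩
  · simpa [ha, hb] using C₀.valid (show (G.induce Sᶜ).Adj ⟨a, ha⟩ ⟨b, hb⟩ from hab)

lemma IsColoringOff.colorable (h : G.IsColoringOff ∅ k C) : G.Colorable k :=
  (colorable_iff_exists_bdd_nat_coloring k).2
    ⟨Coloring.mk C fun hab => h.2 _ _ hab (Set.notMem_empty _) (Set.notMem_empty _),
      fun w => h.1 w (Set.notMem_empty w)⟩

lemma IsColoringOff.update_new_color [DecidableEq V] (h : G.IsColoringOff (insert y S) k C) :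
    G.IsColoringOff S (k + 1) (Function.update C y k) := by
  refine ⟨fun w hw => ?_, fun a b hab ha hb => ?_⟩
  · by_cases hwy : w = y
    · simp [hwy]
    · simpa [hwy] using (h.1 w (by simp [hwy, hw])).trans (Nat.lt_succ_self k)
  · by_cases hay : a = y <;> by_cases hby : b = y
    · exact absurd (hay.trans hby.symm) hab.ne
    · subst hay; simpa [hby] using (h.1 b (by simp [hby, hb])).ne'
    · subst hby; simpa [hay] using (h.1 a (by simp [hay, ha])).ne
    · simpa [hay, hby] using h.2 a b hab (by simp [hay, ha]) (by simp [hby, hb])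

lemma IsColoringOff.update_of_neighborSet_subset [DecidableEq V] (h : G.IsColoringOff {z} k C)
    (hxz : x ≠ z) (hN : G.neighborSet z ⊆ G.neighborSet x) :
    G.IsColoringOff ∅ k (Function.update C z (C x)) := by
  have hCN : ∀ w, G.Adj z w → C w ≠ C x := fun w hw =>
    h.2 w x (hN hw).symm (G.ne_of_adj hw).symm hxz
  refine ⟨fun w _ => ?_, fun a b hab _ _ => ?_⟩
  · by_cases hwz : w = z
    · simpa [hwz] using h.1 x hxz
    · simpa [hwz] using h.1 w hwz
  · by_cases haz : a = z <;> by_cases hbz : b = z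
    · exact absurd (haz.trans hbz.symm) hab.ne
    · subst haz; simpa [hbz] using (hCN b hab).symm
    · subst hbz; simpa [haz] using hCN a hab.symm
    · simpa [haz, hbz] using h.2 a b hab haz hbz

end SimpleGraph

open Finset

section

variable {V : Type*} {G : SimpleGraph V}

/-- A colour class inside a neighbourhood is independent, so claw-freeness bounds it by two. -/
lemma ClawFree.card_le_two_mul_card_image (hcf : ClawFree G) {x : V} {s : Finset V}
    (hs : ∀ w ∈ s, G.Adj x w) {α : Type*} [DecidableEq α] (C : V → α)
    (hC : ∀ a ∈ s, ∀ b ∈ s, G.Adj a b → C a ≠ C b) : #s ≤ 2 * #(s.image C) := by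
  refine card_le_mul_card_image s 2 fun c _ => ?_
  by_contra! hlt
  obtain ⟨a, ha, b, hb, c, hc, hab, hac, hbc⟩ := two_lt_card.1 hlt
  simp only [mem_filter] at ha hb hc
  rcases hcf x a b c hab hac hbc (hs a ha.1) (hs b hb.1) (hs c hc.1) with h | h | h
  · exact hC a ha.1 b hb.1 h (ha.2.trans hb.2.symm)
  · exact hC a ha.1 c hc.1 h (ha.2.trans hc.2.symm)
  · exact hC b hb.1 c hc.1 h (hb.2.trans hc.2.symm)

/-- The neighbours of `x` avoid the colour of `x`, so they use at most `k - 1` colours. -/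
lemma ClawFree.card_neighborFinset_sdiff_le [Fintype V] [DecidableRel G.Adj] [DecidableEq V]
    (hcf : ClawFree G) {s : Finset V} {k : ℕ} {C : V → ℕ} (hC : G.IsColoringOff s k C)
    {x : V} (hx : x ∉ s) : #(G.neighborFinset x \ s) ≤ 2 * (k - 1) := by
  have hmem : ∀ w ∈ G.neighborFinset x \ s, G.Adj x w ∧ w ∉ s := by simp
  calc #(G.neighborFinset x \ s)
      ≤ 2 * #((G.neighborFinset x \ s).image C) :=
        hcf.card_le_two_mul_card_image (fun w hw => (hmem w hw).1) C
          fun a ha b hb hab => hC.2 a b hab (hmem a ha).2 (hmem b hb).2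
    _ ≤ 2 * #((range k).erase (C x)) := by
        gcongr
        intro c hc
        obtain ⟨w, hw, rfl⟩ := mem_image.1 hc
        exact mem_erase.2 ⟨hC.2 w x (hmem w hw).1.symm (hmem w hw).2 hx,
          mem_range.2 (hC.1 w (hmem w hw).2)⟩
    _ = 2 * (k - 1) := by rw [card_erase_of_mem (mem_range.2 (hC.1 x hx)), card_range]

variable {t : ℕ}

lemma DoubleCritical.not_colorable (hG : DoubleCritical G t) {k : ℕ} (hk : k < t) :
    ¬ G.Colorable k := fun h => by
  have := chromaticNumber_le_iff_colorable.2 h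
  rw [hG.2.1] at this
  exact absurd (by exact_mod_cast this) hk.not_ge

lemma DoubleCritical.exists_isColoringOff (hG : DoubleCritical G t) {u v : V} (huv : G.Adj u v) :
    ∃ C, G.IsColoringOff {u, v} (t - 2) C := by
  refine exists_isColoringOff_of_colorable_induce (chromaticNumber_le_iff_colorable.1 ?_)
  rw [hG.2.2 u v huv]
  exact le_of_eq (by norm_cast)

/-- If every edge contained `x`, giving `x` a colour of its own would 2-colour `G`. -/
lemma DoubleCritical.exists_adj_ne (hG : DoubleCritical G t) (ht : 3 ≤ t) (x : V) :
    ∃ u v, G.Adj u v ∧ u ≠ x ∧ v ≠ x := by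
  classical
  by_contra! h
  have hC : G.IsColoringOff (insert x ∅) 1 0 :=
    ⟨fun _ _ => Nat.one_pos, fun a b hab ha hb =>
      absurd (h a b hab (by simpa using ha)) (by simpa using hb)⟩
  exact hG.not_colorable (show 1 + 1 < t by omega) hC.update_new_color.colorable

/-- Colouring `G - {y, z}` for an edge `yz`, giving `y` a new colour and `z` the colour of `x`
would colour `G` with `t - 1` colours. -/
lemma DoubleCritical.not_neighborSet_subset (hG : DoubleCritical G t) (ht : 2 ≤ t) {x z : V}
    (hxz : x ≠ z) : ¬ G.neighborSet z ⊆ G.neighborSet x := fun hN => by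
  classical
  have : Nontrivial V := ⟨⟨x, z, hxz⟩⟩
  obtain ⟨y, hzy⟩ := hG.1.preconnected.exists_adj_of_nontrivial z
  obtain ⟨C, hC⟩ := hG.exists_isColoringOff hzy.symm
  exact hG.not_colorable (show t - 2 + 1 < t by omega)
    (hC.update_new_color.update_of_neighborSet_subset hxz hN).colorable

end

theorem stmt_4 {V : Type*} [Fintype V] (G : SimpleGraph V) [DecidableRel G.Adj] (t : ℕ)
    (ht : 6 ≤ t) (hG : DoubleCritical G t) (hcf : ClawFree G) (x : V) :
    G.degree x ≤ 2 * t - 4 ∧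
      (G.degree x < Fintype.card V - 1 → G.degree x ≤ 2 * t - 6) := by
  classical
  have hsdiff : ∀ u v, G.Adj u v → u ≠ x → v ≠ x →
      #(G.neighborFinset x \ {u, v}) ≤ 2 * (t - 3) := fun u v huv hu hv => by
    obtain ⟨C, hC⟩ := hG.exists_isColoringOff huv
    have hC' : G.IsColoringOff ↑({u, v} : Finset V) (t - 2) C := by simpa using hC
    exact (hcf.card_neighborFinset_sdiff_le hC' (by simp [hu.symm, hv.symm])).trans (by omega)
  refine ⟨?_, fun hlt => ?_⟩
  · obtain ⟨u, v, huv, hu, hv⟩ := hG.exists_adj_ne (by omega) x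
    calc G.degree x = #(G.neighborFinset x) := (card_neighborFinset_eq_degree G x).symm
      _ ≤ #(G.neighborFinset x \ {u, v}) + #{u, v} := card_le_card_sdiff_add_card
      _ ≤ 2 * (t - 3) + 2 := add_le_add (hsdiff u v huv hu hv) card_le_two
      _ ≤ 2 * t - 4 := by omega
  · obtain ⟨z, hxz, hnxz⟩ : ∃ z, x ≠ z ∧ ¬ G.Adj x z := by
      simpa [IsUniversal] using (degree_lt_card_sub_one G x).1 hlt
    obtain ⟨w, hzw, hnxw⟩ : ∃ w, G.Adj z w ∧ ¬ G.Adj x w := by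
      simpa [Set.subset_def] using hG.not_neighborSet_subset (by omega) hxz
    have hdisj : Disjoint (G.neighborFinset x) {z, w} := by simp [hnxz, hnxw]
    calc G.degree x = #(G.neighborFinset x \ {z, w}) := by
          rw [sdiff_eq_self_of_disjoint hdisj, card_neighborFinset_eq_degree]
      _ ≤ 2 * (t - 3) := hsdiff z w hzw hxz.symm (by rintro rfl; exact hnxz hzw.symm)
      _ = 2 * t - 6 := by omega
end

section
/- There is no double-critical, 6-chromatic, claw-free graph other than K_6; that is, if G is a claw-free double-critical graph with chromatic number 6, then G is the complete graph on 6 vertices. -/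
/-!
Suppose `p` and `q` are distinct and non-adjacent. If some edge `ab` misses `N[p]`, a 4-colouring
of `G - a - b` colours `N(p)` with the three colours other than that of `p`, and by claw-freeness
each colour class in `N(p)` has at most two vertices, so `|N(p)| ≤ 6`. Otherwise `N(q) ⊆ N(p)`, and
`q` could take the colour of `p` in a 5-colouring of `G - q`.

For every edge `xy`, each colour of a 4-colouring of `G - x - y` occurs on a common neighbour of
`x` and `y`, since otherwise recolouring would 5-colour `G`; so every `v ∈ N(p)` has at least four
neighbours in `N(p)`. `N(p)` is not a clique, as `N[p]` would then be a 6-clique inside the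
5-colourable graph `G - q`. But if `y, v ∈ N(p)` are non-adjacent, the colour of `v` in a
4-colouring of `G - p - y` occurs on a common neighbour `w` of `p` and `y`, a second non-neighbour
of `v` in `N(p)`, leaving `v` at most three neighbours there.
-/

open SimpleGraph

namespace SimpleGraph

variable {V α : Type*} {G : SimpleGraph V}

def IsColoringOn (G : SimpleGraph V) (S : Set V) (c : V → α) : Prop :=
  ∀ ⦃u⦄, u ∈ S → ∀ ⦃v⦄, v ∈ S → G.Adj u v → c u ≠ c v

namespace IsColoringOn

variable {S T : Set V} {c : V → α}

lemma mono (hc : G.IsColoringOn S c) (hTS : T ⊆ S) : G.IsColoringOn T c :=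
  fun _ hu _ hv => hc (hTS hu) (hTS hv)

lemma comp {β : Type*} (hc : G.IsColoringOn S c) {f : α → β} (hf : Function.Injective f) :
    G.IsColoringOn S (f ∘ c) :=
  fun _ hu _ hv huv => hf.ne (hc hu hv huv)

lemma update_insert [DecidableEq V] (hc : G.IsColoringOn S c) {y : V} {a : α}
    (ha : ∀ v ∈ S, G.Adj y v → c v ≠ a) :
    G.IsColoringOn (insert y S) (Function.update c y a) := by
  intro u hu v hv huv
  rcases eq_or_ne u y with rfl | hu'
  · have hv' : v ≠ u := (G.ne_of_adj huv).symm
    rw [Function.update_self, Function.update_of_ne hv']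
    exact (ha v (hv.resolve_left hv') huv).symm
  rcases eq_or_ne v y with rfl | hv'
  · rw [Function.update_self, Function.update_of_ne hu']
    exact ha u (hu.resolve_left hu') huv.symm
  rw [Function.update_of_ne hu', Function.update_of_ne hv']
  exact hc (hu.resolve_left hu') (hv.resolve_left hv') huv

lemma colorable [Fintype α] (hc : G.IsColoringOn Set.univ c) : G.Colorable (Fintype.card α) :=
  (Coloring.mk c fun huv => hc trivial trivial huv).colorable

lemma encard_le_of_isClique [Fintype α] (hc : G.IsColoringOn S c) {K : Set V} (hK : G.IsClique K)
    (hKS : K ⊆ S) : K.encard ≤ Fintype.card α := by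
  have hinj : K.InjOn c := fun u hu v hv huv => by
    by_contra hne
    exact hc (hKS hu) (hKS hv) (hK hu hv hne) huv
  calc K.encard ≤ (Set.univ : Set α).encard :=
        Set.encard_le_encard_of_injOn (Set.mapsTo_univ _ _) hinj
    _ = Fintype.card α := by simp

end IsColoringOn

lemma Colorable.exists_isColoringOn {n : ℕ} [NeZero n] {S : Set V} (h : (G.induce S).Colorable n) :
    ∃ c : V → Fin n, G.IsColoringOn S c := by
  classical
  obtain ⟨C⟩ := h
  refine ⟨fun v => if hv : v ∈ S then C ⟨v, hv⟩ else 0, fun u hu v hv huv => ?_⟩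
  simpa only [dif_pos hu, dif_pos hv] using C.valid (v := ⟨u, hu⟩) (w := ⟨v, hv⟩) huv

lemma nonempty_top_iso_top_fin {t : ℕ}
    (h : (⊤ : SimpleGraph V).chromaticNumber = t) :
    Nonempty ((⊤ : SimpleGraph V) ≃g (⊤ : SimpleGraph (Fin t))) := by
  rw [chromaticNumber_top_eq_enat_card] at h
  have : Finite V := ENat.card_lt_top.1 (by simp [h])
  rw [ENat.card_eq_coe_natCard, Nat.cast_inj] at h
  exact ⟨Iso.completeGraph (Finite.equivFinOfCardEq h)⟩

end SimpleGraph

namespace DoubleCritical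

variable {V : Type*} {G : SimpleGraph V} {n : ℕ}

lemma not_colorable_s5 (hG : DoubleCritical G (n + 1)) : ¬ G.Colorable n := fun h => by
  have := h.chromaticNumber_le
  rw [hG.2.1, Nat.cast_le] at this
  omega

lemma colorable_induce_compl_pair_s5 (hG : DoubleCritical G (n + 2)) {x y : V} (hxy : G.Adj x y) :
    (G.induce ({x, y}ᶜ : Set V)).Colorable n := by
  rw [← chromaticNumber_le_iff_colorable, hG.2.2 x y hxy, Nat.cast_add, Nat.cast_ofNat]
  exact add_tsub_le_right

lemma exists_adj (hG : DoubleCritical G (n + 2)) (v : V) : ∃ w, G.Adj v w := by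
  by_contra! hv
  have hsingle : ∀ u, u = v := fun u => by
    obtain ⟨p⟩ := hG.1.preconnected v u
    cases p with
    | nil => rfl
    | cons h _ => exact (hv _ h).elim
  refine hG.not_colorable_s5 ⟨Coloring.mk (fun _ => (0 : Fin (n + 1))) fun {a b} hab => ?_⟩
  exact (G.ne_of_adj hab (by rw [hsingle a, hsingle b])).elim

lemma exists_mem_commonNeighbors_color_eq (hG : DoubleCritical G (n + 2)) {x y : V}
    (hxy : G.Adj x y) {c : V → Fin n} (hc : G.IsColoringOn {x, y}ᶜ c) (i : Fin n) :
    ∃ w ∈ G.commonNeighbors x y, c w = i := by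
  classical
  by_contra! hno
  -- Move the `i`-coloured neighbours of `x` and the vertex `y` to a new colour, then give `x`
  -- the colour `i`: this would be a proper `(n + 1)`-colouring of `G`.
  set c' : V → Option (Fin n) := fun u => if G.Adj x u ∧ c u = i then none else some (c u)
  have hc' : G.IsColoringOn {x, y}ᶜ c' := by
    intro u hu v hv huv
    simp only [c']
    split_ifs with hu' hv' hv'
    · exact (hc hu hv huv (hu'.2.trans hv'.2.symm)).elim
    · simp
    · simp
    · simpa using hc hu hv huv
  have hy := hc'.update_insert (y := y) (a := none) fun v hv hyv hv' => by
    simp only [c', ite_eq_left_iff, reduceCtorEq, imp_false, not_not] at hv'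
    exact hno v ⟨hv'.1, hyv⟩ hv'.2
  have hx := hy.update_insert (y := x) (a := some i) fun v hv hxv hv' => by
    rcases eq_or_ne v y with rfl | hvy
    · simp at hv'
    · simp only [Function.update_of_ne hvy, c', hxv, true_and] at hv'
      split_ifs at hv' with hvi
      simp_all
  exact hG.not_colorable_s5 (by simpa using (hx.mono fun u _ => by simp; tauto).colorable)

variable [NeZero n]

lemma exists_isColoringOn_compl_pair (hG : DoubleCritical G (n + 2)) {x y : V} (hxy : G.Adj x y) :
    ∃ c : V → Fin n, G.IsColoringOn {x, y}ᶜ c :=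
  (hG.colorable_induce_compl_pair_s5 hxy).exists_isColoringOn

lemma exists_isColoringOn_compl_singleton (hG : DoubleCritical G (n + 2)) (v : V) :
    ∃ c : V → Option (Fin n), G.IsColoringOn {v}ᶜ c := by
  classical
  obtain ⟨w, hvw⟩ := hG.exists_adj v
  obtain ⟨c, hc⟩ := hG.exists_isColoringOn_compl_pair hvw
  refine ⟨Function.update (some ∘ c) w none, ((hc.comp (Option.some_injective _)).update_insert
    fun _ _ _ => Option.some_ne_none _).mono fun u hu => (em (u = w)).imp_right ?_⟩
  simp_all

lemma encard_le_of_isClique (hG : DoubleCritical G (n + 2)) {K : Set V} (hK : G.IsClique K)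
    {v : V} (hv : v ∉ K) : K.encard ≤ n + 1 := by
  obtain ⟨c, hc⟩ := hG.exists_isColoringOn_compl_singleton v
  simpa using hc.encard_le_of_isClique hK fun u hu => by rintro rfl; exact hv hu

lemma not_neighborSet_subset_s5 (hG : DoubleCritical G (n + 2)) {p q : V} (hpq : p ≠ q) :
    ¬ G.neighborSet q ⊆ G.neighborSet p := fun hsub => by
  classical
  obtain ⟨c, hc⟩ := hG.exists_isColoringOn_compl_singleton q
  have hext := hc.update_insert (a := c p) fun v hv hqv => hc hv hpq (hsub hqv).symm
  exact hG.not_colorable_s5 (by simpa using (hext.mono fun u _ => em (u = q)).colorable)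

lemma le_encard_commonNeighbors (hG : DoubleCritical G (n + 2)) {x y : V} (hxy : G.Adj x y) :
    (n : ℕ∞) ≤ (G.commonNeighbors x y).encard := by
  obtain ⟨c, hc⟩ := hG.exists_isColoringOn_compl_pair hxy
  choose w hw hcw using hG.exists_mem_commonNeighbors_color_eq hxy hc
  have hinj : Function.Injective w := fun i j hij => by rw [← hcw i, ← hcw j, hij]
  calc (n : ℕ∞) = ENat.card (Fin n) := by simp
    _ ≤ (Set.range w).encard := hinj.encard_range
    _ ≤ (G.commonNeighbors x y).encard := Set.encard_le_encard (Set.range_subset_iff.2 hw)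

lemma not_isClique_neighborSet (hG : DoubleCritical G (n + 2)) {p q : V} (hpq : p ≠ q)
    (hnadj : ¬ G.Adj p q) : ¬ G.IsClique (G.neighborSet p) := fun hclique => by
  obtain ⟨y, hy⟩ := hG.exists_adj p
  have hK : G.IsClique (insert p (insert y (G.commonNeighbors p y))) :=
    (isClique_insert.2 ⟨hclique, fun _ hb _ => hb⟩).subset <| Set.insert_subset_insert <|
      Set.insert_subset hy (G.commonNeighbors_subset_neighborSet_left p y)
  have hKq := hG.encard_le_of_isClique hK (v := q) <| by
    rintro (rfl | rfl | hq)
    exacts [hpq rfl, hnadj hy, hnadj (G.mem_commonNeighbors.1 hq).1]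
  rw [Set.encard_insert_of_notMem (by simp [G.ne_of_adj hy, G.notMem_commonNeighbors_left]),
    Set.encard_insert_of_notMem (G.notMem_commonNeighbors_right p y)] at hKq
  have hcommon := hG.le_encard_commonNeighbors hy
  generalize (G.commonNeighbors p y).encard = a at hKq hcommon
  enat_to_nat
  omega

lemma exists_mem_commonNeighbors_not_adj (hG : DoubleCritical G (n + 2)) {x y v : V}
    (hxy : G.Adj x y) (hxv : G.Adj x v) (hvy : v ≠ y) (hyv : ¬ G.Adj y v) :
    ∃ w ∈ G.commonNeighbors x y, w ≠ v ∧ ¬ G.Adj v w := by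
  obtain ⟨c, hc⟩ := hG.exists_isColoringOn_compl_pair hxy
  obtain ⟨w, hw, hcw⟩ := hG.exists_mem_commonNeighbors_color_eq hxy hc (c v)
  obtain ⟨hxw, hyw⟩ := G.mem_commonNeighbors.1 hw
  have hwv : w ≠ v := by rintro rfl; exact hyv hyw
  refine ⟨w, hw, hwv, fun hvw => hc ?_ ?_ hvw hcw.symm⟩
  · simp [(G.ne_of_adj hxv).symm, hvy]
  · simp [(G.ne_of_adj hxw).symm, (G.ne_of_adj hyw).symm]

lemma exists_isColoringOn_insert_neighborSet (hG : DoubleCritical G (n + 2)) {p q : V}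
    (hpq : p ≠ q) (hnadj : ¬ G.Adj p q) :
    ∃ c : V → Fin n, G.IsColoringOn (insert p (G.neighborSet p)) c := by
  by_cases h : ∃ a b, G.Adj a b ∧ a ∉ insert p (G.neighborSet p) ∧ b ∉ insert p (G.neighborSet p)
  · obtain ⟨a, b, hab, ha, hb⟩ := h
    obtain ⟨c, hc⟩ := hG.exists_isColoringOn_compl_pair hab
    refine ⟨c, hc.mono fun u hu => ?_⟩
    rintro (rfl | rfl)
    exacts [ha hu, hb hu]
  · push Not at h
    refine (hG.not_neighborSet_subset_s5 hpq fun w hqw => ?_).elim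
    rcases h q w hqw (by simp [hpq.symm, hnadj]) with rfl | hpw
    exacts [(hnadj hqw.symm).elim, hpw]

end DoubleCritical

namespace ClawFree

variable {V : Type*} {G : SimpleGraph V}

lemma encard_le_two_of_isIndepSet (hcf : ClawFree G) {x : V} {I : Set V} (hI : G.IsIndepSet I)
    (hIx : I ⊆ G.neighborSet x) : I.encard ≤ 2 := by
  by_contra! h
  obtain ⟨T, hTI, hT⟩ := Set.exists_subset_encard_eq (Order.add_one_le_of_lt h)
  obtain ⟨a, b, c, hab, hac, hbc, rfl⟩ := Set.encard_eq_three.1 hT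
  have ha : a ∈ I := hTI (by simp)
  have hb : b ∈ I := hTI (by simp)
  have hc : c ∈ I := hTI (by simp)
  rcases hcf x a b c hab hac hbc (hIx ha) (hIx hb) (hIx hc) with h | h | h
  exacts [hI ha hb hab h, hI ha hc hac h, hI hb hc hbc h]

lemma encard_neighborSet_le (hcf : ClawFree G) {α : Type*} [Fintype α] {x : V} {c : V → α}
    (hc : G.IsColoringOn (insert x (G.neighborSet x)) c) :
    (G.neighborSet x).encard ≤ 2 * (Fintype.card α - 1 : ℕ) := by
  classical
  have hfiber (i : α) : G.IsIndepSet {v ∈ G.neighborSet x | c v = i} :=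
    fun u hu v hv huv hadj => hc (.inr hu.1) (.inr hv.1) hadj (hu.2.trans hv.2.symm)
  have hcover : G.neighborSet x ⊆ ⋃ i ∈ Finset.univ.erase (c x), {v ∈ G.neighborSet x | c v = i} :=
    fun v hv => Set.mem_biUnion (Finset.mem_erase.2 ⟨(hc (.inl rfl) (.inr hv) hv).symm,
      Finset.mem_univ _⟩) ⟨hv, rfl⟩
  calc (G.neighborSet x).encard
      ≤ ∑ i ∈ Finset.univ.erase (c x), {v ∈ G.neighborSet x | c v = i}.encard :=
        (Set.encard_le_encard hcover).trans (Finset.set_encard_biUnion_le _ _)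
    _ ≤ ∑ _i ∈ Finset.univ.erase (c x), 2 :=
        Finset.sum_le_sum fun i _ => hcf.encard_le_two_of_isIndepSet (hfiber i) (Set.sep_subset _ _)
    _ = 2 * (Fintype.card α - 1 : ℕ) := by
        simp [Finset.card_erase_of_mem, mul_comm]

end ClawFree

theorem DoubleCritical.adj_of_clawFree {V : Type*} {G : SimpleGraph V} {n : ℕ} [NeZero n]
    (hG : DoubleCritical G (n + 2)) (hn : n ≤ 4) (hcf : ClawFree G) {p q : V} (hpq : p ≠ q) :
    G.Adj p q := by
  by_contra hnadj
  obtain ⟨c, hc⟩ := hG.exists_isColoringOn_insert_neighborSet hpq hnadj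
  have hN := hcf.encard_neighborSet_le hc
  obtain ⟨y, hy, v, hv, hyv, hnyv⟩ : ∃ y ∈ G.neighborSet p, ∃ v ∈ G.neighborSet p,
      y ≠ v ∧ ¬ G.Adj y v := by
    simpa [IsClique, Set.Pairwise] using hG.not_isClique_neighborSet hpq hnadj
  obtain ⟨w, hw, hwv, hnvw⟩ := hG.exists_mem_commonNeighbors_not_adj hy hv hyv.symm hnyv
  obtain ⟨hpw, hyw⟩ := G.mem_commonNeighbors.1 hw
  have hsub : (insert v (insert y (insert w (G.commonNeighbors p v)))).encard
      ≤ (G.neighborSet p).encard := Set.encard_le_encard <| Set.insert_subset hv <|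
    Set.insert_subset hy <| Set.insert_subset hpw (G.commonNeighbors_subset_neighborSet_left p v)
  rw [Set.encard_insert_of_notMem
      (by simp [hyv.symm, hwv.symm, G.notMem_commonNeighbors_right]),
    Set.encard_insert_of_notMem
      (by simp [G.ne_of_adj hyw, G.mem_commonNeighbors, G.adj_comm v y, hnyv]),
    Set.encard_insert_of_notMem (by simp [G.mem_commonNeighbors, hnvw])] at hsub
  have hcommon := hG.le_encard_commonNeighbors hv
  simp only [Fintype.card_fin] at hN
  generalize (G.commonNeighbors p v).encard = a at hsub hcommon
  generalize (G.neighborSet p).encard = b at hsub hN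
  enat_to_nat
  omega

theorem stmt_5 {V : Type*} (G : SimpleGraph V)
    (hG : DoubleCritical G 6) (hcf : ClawFree G) :
    Nonempty (G ≃g (⊤ : SimpleGraph (Fin 6))) := by
  obtain rfl : G = ⊤ := by
    ext u v
    exact ⟨G.ne_of_adj, hG.adj_of_clawFree le_rfl hcf⟩
  exact nonempty_top_iso_top_fin hG.2.1
end

section
/- There is no double-critical, 7-chromatic, claw-free graph other than K_7; that is, if G is a claw-free double-critical graph with chromatic number 7, then G is the complete graph on 7 vertices. -/
/-!
Write `N(x) \ N[y]` for the private neighbourhood of `x` with respect to `y`. Colouring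
`G - x - y` with five colours and giving one extra colour to a suitable independent set shows that
every colour appears on a common neighbour of `x` and `y`; claw-freeness makes each colour class
inside a neighbourhood a non-adjacent set of at most two vertices.

If `x` misses an edge `ab`, a colouring of `G - a - b` splits `N(x)` into at most four such
classes, which forces `deg x = 8` and exactly two non-neighbours in `N(x)` for every `y ∈ N(x)`.
This propagates to the neighbours of `x` and to the vertices `z` at distance two from `x`, and
double counting the non-edges between `N(x) ∩ N(z)` and `N(x) \ N(z)` gives
`|N(x) ∩ N(z)| = 7`. Then `N(z) \ N[x] = {t}` and `N(t) \ N[x] = {z}`, and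
`N(x) ∩ N(z) ∩ N(t)` is a set of five vertices closed under taking non-neighbours in `N(x)`,
hence a union of colour classes of size two: a contradiction. So no vertex misses an edge; two
non-adjacent vertices would then have nested neighbourhoods, and recolouring gives a 6-colouring.
Hence `G` is complete, so it is `K₇`.
-/

open SimpleGraph

open Set

section Counting

variable {α β ι : Type*}

theorem Set.ncard_eq_sum_ncard_fiber [Fintype ι] {s : Set α} (hs : s.Finite) (f : α → ι) :
    s.ncard = ∑ i, {a ∈ s | f a = i}.ncard := by
  classical
  rw [ncard_eq_toFinset_card _ hs,
    Finset.card_eq_sum_card_fiberwise (f := f) (t := Finset.univ) fun _ _ => Finset.mem_univ _]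
  refine Finset.sum_congr rfl fun i _ => ?_
  rw [← ncard_coe_finset]
  congr 1
  ext
  simp

theorem Set.ncard_mul_le_ncard_mul {s : Set α} {t : Set β} (hs : s.Finite) (ht : t.Finite)
    (r : α → β → Prop) {m n : ℕ} (hm : ∀ a ∈ s, m ≤ {b ∈ t | r a b}.ncard)
    (hn : ∀ b ∈ t, {a ∈ s | r a b}.ncard ≤ n) : s.ncard * m ≤ t.ncard * n := by
  classical
  rw [ncard_eq_toFinset_card _ hs, ncard_eq_toFinset_card _ ht]
  refine Finset.card_mul_le_card_mul r (fun a ha => ?_) fun b hb => ?_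
  · convert hm a (hs.mem_toFinset.1 ha) using 1
    rw [← ncard_coe_finset]
    simp [Finset.bipartiteAbove]
  · convert hn b (ht.mem_toFinset.1 hb) using 1
    rw [← ncard_coe_finset]
    simp [Finset.bipartiteBelow]

end Counting

namespace SimpleGraph

variable {V α : Type*} {G : SimpleGraph V}

def ProperOn (G : SimpleGraph V) (S : Set V) (c : V → α) : Prop :=
  ∀ ⦃u⦄, u ∈ S → ∀ ⦃v⦄, v ∈ S → G.Adj u v → c u ≠ c v

theorem ProperOn.mono {S T : Set V} {c : V → α} (hc : ProperOn G S c) (hTS : T ⊆ S) :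
    ProperOn G T c :=
  fun _ hu _ hv => hc (hTS hu) (hTS hv)

theorem Coloring.exists_properOn [Nonempty α] {S : Set V} (C : (G.induce S).Coloring α) :
    ∃ c : V → α, ProperOn G S c := by
  classical
  refine ⟨fun v => if hv : v ∈ S then C ⟨v, hv⟩ else Classical.arbitrary α, ?_⟩
  intro u hu v hv huv
  simpa [hu, hv] using C.valid (show (G.induce S).Adj ⟨u, hu⟩ ⟨v, hv⟩ from huv)

theorem ProperOn.ncard_le_of_isClique {k : ℕ} {S s : Set V} {c : V → Fin k}
    (hc : ProperOn G S c) (hs : G.IsClique s) (hsS : s ⊆ S) : s.ncard ≤ k := by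
  have hinj : InjOn c s := fun u hu v hv huv =>
    by_contra fun hne => hc (hsS hu) (hsS hv) (hs hu hv hne) huv
  simpa using ncard_le_ncard_of_injOn c (fun _ _ => mem_univ _) hinj

theorem colorable_succ_of_properOn_compl {k : ℕ} {A : Set V} (hA : G.IsIndepSet A)
    {c : V → Fin k} (hc : ProperOn G Aᶜ c) : G.Colorable (k + 1) := by
  classical
  refine ⟨Coloring.mk (fun v => if v ∈ A then Fin.last k else (c v).castSucc) ?_⟩
  intro u v huv
  by_cases hu : u ∈ A <;> by_cases hv : v ∈ A <;> simp only [hu, hv, if_true, if_false]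
  · exact absurd huv (hA hu hv huv.ne)
  · exact (Fin.castSucc_lt_last _).ne'
  · exact (Fin.castSucc_lt_last _).ne
  · exact fun h => hc hu hv huv (Fin.castSucc_injective _ h)

theorem exists_mem_commonNeighbors_color {k : ℕ} (hG : ¬ G.Colorable (k + 1)) {x y : V}
    (hxy : G.Adj x y) {c : V → Fin k} (hc : ProperOn G {x, y}ᶜ c) (i : Fin k) :
    ∃ v ∈ G.commonNeighbors x y, c v = i := by
  classical
  by_contra! hno
  refine hG (colorable_succ_of_properOn_compl (A := insert x {v | G.Adj y v ∧ c v = i})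
    (c := Function.update c y i) ?_ ?_)
  · have hx : ∀ v, G.Adj y v → c v = i → ¬ G.Adj x v := fun v hyv hcv hxv =>
      hno v ⟨hxv, hyv⟩ hcv
    refine Set.pairwise_insert.2 ⟨?_, ?_⟩
    · rintro v ⟨hyv, hcv⟩ w ⟨hyw, hcw⟩ hvw hadj
      by_cases hvx : v = x
      · exact hx w hyw hcw (hvx ▸ hadj)
      by_cases hwx : w = x
      · exact hx v hyv hcv (hwx ▸ hadj.symm)
      exact hc (by simp [hvx, hyv.ne']) (by simp [hwx, hyw.ne']) hadj (hcv.trans hcw.symm)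
    · rintro v ⟨hyv, hcv⟩ hvx
      exact ⟨hx v hyv hcv, fun h => hx v hyv hcv h.symm⟩
  · intro u hu v hv huv
    simp only [mem_compl_iff, mem_insert_iff, mem_ofPred_eq, not_or, not_and] at hu hv
    rcases eq_or_ne u y with rfl | huy
    · simpa [huv.ne'] using fun h => hv.2 huv h.symm
    rcases eq_or_ne v y with rfl | hvy
    · simpa [huv.ne] using hu.2 huv.symm
    simpa [huy, hvy] using hc (by simp [hu.1, huy]) (by simp [hv.1, hvy]) huv

theorem colorable_succ_of_neighborSet_subset {k : ℕ} {x z u : V} (hxz : ¬ G.Adj x z)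
    (hne : x ≠ z) (hN : G.neighborSet x ⊆ G.neighborSet z) (hxu : G.Adj x u)
    {c : V → Fin k} (hc : ProperOn G {x, u}ᶜ c) : G.Colorable (k + 1) := by
  classical
  have hzu : G.Adj z u := hN hxu
  have hz : z ∈ ({x, u}ᶜ : Set V) := by simp [hne.symm, hzu.ne]
  refine colorable_succ_of_properOn_compl (A := {u}) (c := Function.update c x (c z))
    (by simp) ?_
  have key : ∀ ⦃w⦄, w ∈ ({u}ᶜ : Set V) → G.Adj x w →
      c z ≠ Function.update c x (c z) w := by
    intro w hw hxw
    have hwx : w ≠ x := hxw.ne'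
    simpa [hwx] using hc hz (by simp_all) (hN hxw)
  intro v hv w hw hvw
  rcases eq_or_ne v x with rfl | hvx
  · simpa using key hw hvw
  rcases eq_or_ne w x with rfl | hwx
  · simpa using (key hv hvw.symm).symm
  simpa [hvx, hwx] using hc (by simp_all) (by simp_all) hvw

def privateNeighborSet (G : SimpleGraph V) (x y : V) : Set V :=
  {w | G.Adj x w ∧ w ≠ y ∧ ¬ G.Adj y w}

@[simp]
theorem mem_privateNeighborSet {x y w : V} :
    w ∈ G.privateNeighborSet x y ↔ G.Adj x w ∧ w ≠ y ∧ ¬ G.Adj y w :=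
  Iff.rfl

theorem privateNeighborSet_subset (x y : V) : G.privateNeighborSet x y ⊆ G.neighborSet x :=
  fun _ hw => hw.1

theorem ncard_inter_insert_add_ncard_privateNeighborSet {x : V}
    (hfin : (G.neighborSet x).Finite) (y : V) :
    (G.neighborSet x ∩ insert y (G.neighborSet y)).ncard + (G.privateNeighborSet x y).ncard =
      (G.neighborSet x).ncard := by
  convert ncard_inter_add_ncard_sdiff_eq_ncard _ (insert y (G.neighborSet y)) hfin using 3
  ext w
  simp

theorem ncard_neighborSet_of_adj {x y : V} (hfin : (G.neighborSet x).Finite) (h : G.Adj x y) :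
    (G.neighborSet x).ncard =
      (G.commonNeighbors x y).ncard + (G.privateNeighborSet x y).ncard + 1 := by
  rw [← ncard_inter_insert_add_ncard_privateNeighborSet hfin y,
    Set.inter_insert_of_mem (show y ∈ G.neighborSet x from h)]
  change (insert y (G.commonNeighbors x y)).ncard + _ = _
  rw [ncard_insert_of_notMem (s := G.commonNeighbors x y) (fun hy => G.loopless.irrefl y hy.2)
    (hfin.subset fun _ hw => hw.1)]
  omega

theorem ncard_neighborSet_of_not_adj {x y : V} (hfin : (G.neighborSet x).Finite)
    (h : ¬ G.Adj x y) :
    (G.neighborSet x).ncard = (G.commonNeighbors x y).ncard + (G.privateNeighborSet x y).ncard := by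
  rw [← ncard_inter_insert_add_ncard_privateNeighborSet hfin y,
    Set.inter_insert_of_notMem (show y ∉ G.neighborSet x from h)]
  rfl

theorem privateNeighborSet_eq_union {x z u : V} (hzx : ¬ G.Adj z x) (hxu : G.Adj x u) :
    G.privateNeighborSet z u = (G.privateNeighborSet x u ∩ G.neighborSet z) ∪
      (G.privateNeighborSet z x \ G.privateNeighborSet u x) := by
  ext w
  simp only [mem_privateNeighborSet, mem_union, mem_inter_iff, mem_sdiff, mem_neighborSet]
  have : G.Adj z w → w ≠ x := fun hzw h => hzx (h ▸ hzw)
  have : w = u → G.Adj x w := fun h => h ▸ hxu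
  tauto

end SimpleGraph

namespace ClawFree

variable {V : Type*} {G : SimpleGraph V}

theorem encard_le_two (hcf : ClawFree G) {x : V} {s : Set V} (hs : s ⊆ G.neighborSet x)
    (hind : G.IsIndepSet s) : s.encard ≤ 2 := by
  by_contra! h
  obtain ⟨t, hts, ht⟩ := exists_subset_encard_eq (Order.add_one_le_of_lt h)
  obtain ⟨a, b, c, hab, hac, hbc, rfl⟩ := encard_eq_three.1 ht
  have ha : a ∈ s := hts (by simp)
  have hb : b ∈ s := hts (by simp)
  have hc : c ∈ s := hts (by simp)
  rcases hcf x a b c hab hac hbc (hs ha) (hs hb) (hs hc) with h | h | h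
  · exact hind ha hb hab h
  · exact hind ha hc hac h
  · exact hind hb hc hbc h

theorem isClique_privateNeighborSet (hcf : ClawFree G) {x y : V} (hxy : G.Adj x y) :
    G.IsClique (G.privateNeighborSet x y) := by
  intro s hs t ht hst
  rcases hcf x y s t hs.2.1.symm ht.2.1.symm hst hxy hs.1 ht.1 with h | h | h
  · exact absurd h hs.2.2
  · exact absurd h ht.2.2
  · exact h

theorem encard_colorClass_le_two {α : Type*} (hcf : ClawFree G) {S s : Set V}
    {c : V → α} (hc : G.ProperOn S c) {x : V} (hs : s ⊆ G.neighborSet x) (hsS : s ⊆ S)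
    (i : α) : {v ∈ s | c v = i}.encard ≤ 2 :=
  hcf.encard_le_two (fun _ hv => hs hv.1) fun _ hu _ hv _ huv =>
    hc (hsS hu.1) (hsS hv.1) huv (hu.2.trans hv.2.symm)

section ColorClasses

variable {k : ℕ} {x : V} {c : V → Fin k}

theorem ncard_colorClass_le (hcf : ClawFree G)
    (hc : G.ProperOn (insert x (G.neighborSet x)) c) (i : Fin k) :
    {v ∈ G.neighborSet x | c v = i}.ncard ≤ if i = c x then 0 else 2 := by
  split_ifs with hi
  · suffices {v ∈ G.neighborSet x | c v = i} = ∅ by rw [this, ncard_empty]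
    refine eq_empty_iff_forall_notMem.2 ?_
    rintro v ⟨hxv, rfl⟩
    exact hc (mem_insert _ _) (mem_insert_of_mem _ hxv) hxv hi.symm
  · exact (encard_le_coe_iff_finite_ncard_le.1 (hcf.encard_colorClass_le_two hc subset_rfl
      (subset_insert _ _) i)).2

theorem ncard_neighborSet_le (hcf : ClawFree G)
    (hc : G.ProperOn (insert x (G.neighborSet x)) c) (hfin : (G.neighborSet x).Finite) :
    (G.neighborSet x).ncard ≤ 2 * (k - 1) := by
  rw [ncard_eq_sum_ncard_fiber hfin c]
  refine (Finset.sum_le_sum fun i _ => hcf.ncard_colorClass_le hc i).trans_eq ?_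
  simp [Finset.sum_ite, Finset.filter_ne', mul_comm]

theorem ncard_colorClass_eq (hcf : ClawFree G)
    (hc : G.ProperOn (insert x (G.neighborSet x)) c) (hfin : (G.neighborSet x).Finite)
    (hx : (G.neighborSet x).ncard = 2 * (k - 1)) (i : Fin k) :
    {v ∈ G.neighborSet x | c v = i}.ncard = if i = c x then 0 else 2 := by
  rw [ncard_eq_sum_ncard_fiber hfin c] at hx
  refine (Finset.sum_eq_sum_iff_of_le fun i _ => hcf.ncard_colorClass_le hc i).1 ?_ i
    (Finset.mem_univ i)
  rw [hx]
  simp [Finset.sum_ite, Finset.filter_ne', mul_comm]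

end ColorClasses

end ClawFree

namespace SimpleGraph

variable {V : Type*} {G : SimpleGraph V}

def MissesEdge (G : SimpleGraph V) (x : V) : Prop :=
  ∃ a b, G.Adj a b ∧ a ≠ x ∧ b ≠ x ∧ ¬ G.Adj x a ∧ ¬ G.Adj x b

structure ClawFreeDC7 (G : SimpleGraph V) : Prop where
  clawFree : ClawFree G
  not_colorable : ¬ G.Colorable 6
  exists_properOn : ∀ ⦃x y⦄, G.Adj x y → ∃ c : V → Fin 5, G.ProperOn {x, y}ᶜ c
  exists_adj : ∀ x, ∃ y, G.Adj x y

namespace ClawFreeDC7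

variable {x y u z : V}

theorem of_doubleCritical (hG : DoubleCritical G 7) (hcf : ClawFree G) : ClawFreeDC7 G := by
  obtain ⟨hconn, hχ, hdc⟩ := hG
  have h6 : ¬ G.Colorable 6 := fun h => by
    have := h.chromaticNumber_le
    rw [hχ] at this
    norm_num at this
  refine ⟨hcf, h6, fun x y hxy => ?_, fun x => ?_⟩
  · have : (G.induce ({x, y}ᶜ : Set V)).Colorable 5 :=
      chromaticNumber_le_iff_colorable.1 (hdc x y hxy).le
    obtain ⟨C⟩ := this
    exact C.exists_properOn
  · have : Nontrivial V := by
      by_contra h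
      rw [not_nontrivial_iff_subsingleton] at h
      exact h6 ⟨Coloring.mk (fun _ => 0) fun huv _ => huv.ne (Subsingleton.elim _ _)⟩
    exact hconn.preconnected.exists_adj_of_nontrivial x

theorem finite_neighborSet (hG : ClawFreeDC7 G) (x : V) : (G.neighborSet x).Finite := by
  obtain ⟨y, hxy⟩ := hG.exists_adj x
  obtain ⟨c, hc⟩ := hG.exists_properOn hxy
  have hsS : G.neighborSet x \ {y} ⊆ {x, y}ᶜ := fun v hv => by
    simp [hv.2, (hv.1 : G.Adj x v).ne']
  refine ((finite_iUnion fun i => finite_of_encard_le_coe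
    (hG.clawFree.encard_colorClass_le_two hc sdiff_subset hsS i)).insert y).subset ?_
  intro v hv
  by_cases hvy : v = y
  · exact .inl hvy
  · exact .inr (mem_iUnion.2 ⟨c v, ⟨hv, hvy⟩, rfl⟩)

theorem five_le_ncard_commonNeighbors (hG : ClawFreeDC7 G) (hxy : G.Adj x y) :
    5 ≤ (G.commonNeighbors x y).ncard := by
  obtain ⟨c, hc⟩ := hG.exists_properOn hxy
  choose f hf hfc using exists_mem_commonNeighbors_color hG.not_colorable hxy hc
  have hinj : f.Injective := fun i j hij => (hfc i).symm.trans (hij ▸ hfc j)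
  calc 5 = (range f).ncard := by rw [ncard_range_of_injective hinj]; simp
    _ ≤ _ := ncard_le_ncard (range_subset_iff.2 hf)
        ((hG.finite_neighborSet x).subset inter_subset_left)

theorem ncard_privateNeighborSet_add_six_le (hG : ClawFreeDC7 G) (hxy : G.Adj x y) :
    (G.privateNeighborSet x y).ncard + 6 ≤ (G.neighborSet x).ncard := by
  rw [ncard_neighborSet_of_adj (hG.finite_neighborSet x) hxy]
  have := hG.five_le_ncard_commonNeighbors hxy
  omega

/-- If `u` were the only non-neighbour of `y` in `N(x)`, a colouring of `G - x - u` would colour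
some common neighbour of `x` and `u` like `y`, and that vertex is adjacent to `y`. -/
theorem ncard_privateNeighborSet_ne_one (hG : ClawFreeDC7 G) (hxy : G.Adj x y) :
    (G.privateNeighborSet x y).ncard ≠ 1 := by
  intro h
  obtain ⟨u, hu⟩ := ncard_eq_one.1 h
  obtain ⟨hxu, huy, hyu⟩ : u ∈ G.privateNeighborSet x y := hu ▸ rfl
  obtain ⟨c, hc⟩ := hG.exists_properOn hxu
  obtain ⟨w, ⟨hxw, huw : G.Adj u w⟩, hcw⟩ :=
    exists_mem_commonNeighbors_color hG.not_colorable hxu hc (c y)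
  have hyw : G.Adj y w := by
    by_contra hyw
    have hw : w ∈ G.privateNeighborSet x y := ⟨hxw, fun h => hyu (h ▸ huw.symm), hyw⟩
    rw [hu, mem_singleton_iff] at hw
    exact G.loopless.irrefl u (hw ▸ huw)
  exact hc (by simp [hxy.ne', huy.symm]) (by simp [hxw.ne', huw.ne']) hyw hcw.symm

theorem exists_properOn_insert_neighborSet (hG : ClawFreeDC7 G) (hx : G.MissesEdge x) :
    ∃ c : V → Fin 5, G.ProperOn (insert x (G.neighborSet x)) c := by
  obtain ⟨a, b, hab, hax, hbx, hxa, hxb⟩ := hx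
  obtain ⟨c, hc⟩ := hG.exists_properOn hab
  refine ⟨c, hc.mono ?_⟩
  rintro v (rfl | hxv)
  · simp [hax.symm, hbx.symm]
  · simp only [mem_compl_iff, mem_insert_iff, mem_singleton_iff, not_or]
    exact ⟨fun h => hxa (h ▸ hxv), fun h => hxb (h ▸ hxv)⟩

theorem ncard_neighborSet_eq_eight (hG : ClawFreeDC7 G) (hx : G.MissesEdge x) :
    (G.neighborSet x).ncard = 8 := by
  obtain ⟨c, hc⟩ := hG.exists_properOn_insert_neighborSet hx
  have hfin := hG.finite_neighborSet x
  refine (hG.clawFree.ncard_neighborSet_le hc hfin).antisymm (not_lt.1 fun hlt => ?_)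
  have hempty : ∀ y, G.Adj x y → G.privateNeighborSet x y = ∅ := fun y hxy => by
    have := hG.ncard_privateNeighborSet_add_six_le hxy
    have := hG.ncard_privateNeighborSet_ne_one hxy
    exact (ncard_eq_zero (hfin.subset (privateNeighborSet_subset x y))).1 (by omega)
  have hclique : G.IsClique (insert x (G.neighborSet x)) := by
    refine isClique_insert.2 ⟨fun u hu v hv huv => by_contra fun h => ?_, fun _ hy _ => hy⟩
    have hv' : v ∈ G.privateNeighborSet x u := ⟨hv, huv.symm, h⟩
    rw [hempty u hu] at hv'
    exact hv'
  have hle := hc.ncard_le_of_isClique hclique subset_rfl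
  rw [ncard_insert_of_notMem (s := G.neighborSet x) (G.loopless.irrefl x) hfin] at hle
  obtain ⟨y, hxy⟩ := hG.exists_adj x
  have := hG.ncard_privateNeighborSet_add_six_le hxy
  omega

theorem ncard_privateNeighborSet_eq_two (hG : ClawFreeDC7 G) (hx : G.MissesEdge x)
    (hxy : G.Adj x y) : (G.privateNeighborSet x y).ncard = 2 := by
  obtain ⟨c, hc⟩ := hG.exists_properOn_insert_neighborSet hx
  have hfin := hG.finite_neighborSet x
  have hy := mem_insert_of_mem x hxy
  have h8 := hG.ncard_neighborSet_eq_eight hx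
  have hclass := hG.clawFree.ncard_colorClass_eq hc hfin h8 (c y)
  rw [if_neg fun h => hc hy (mem_insert _ _) hxy.symm h] at hclass
  obtain ⟨w, ⟨hxw, hcw⟩, hwy⟩ :=
    exists_ne_of_one_lt_ncard (s := {v ∈ G.neighborSet x | c v = c y}) (by omega) y
  have hw : w ∈ G.privateNeighborSet x y :=
    ⟨hxw, hwy, fun hyw => hc hy (mem_insert_of_mem x hxw) hyw hcw.symm⟩
  have := (ncard_pos (hfin.subset (privateNeighborSet_subset x y))).2 ⟨w, hw⟩
  have := hG.ncard_privateNeighborSet_add_six_le hxy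
  have := hG.ncard_privateNeighborSet_ne_one hxy
  omega

/-- The colour classes of `N(x)` are non-adjacent pairs, so a subset of `N(x)` closed under
taking non-neighbours is a union of such pairs. -/
theorem even_ncard_of_privateNeighborSet_subset (hG : ClawFreeDC7 G) 
    (hx : G.MissesEdge x) {U : Set V} (hU : U ⊆ G.neighborSet x)
    (hclosed : ∀ u ∈ U, G.privateNeighborSet x u ⊆ U) : Even U.ncard := by
  obtain ⟨c, hc⟩ := hG.exists_properOn_insert_neighborSet hx
  have hfin := hG.finite_neighborSet x
  rw [ncard_eq_sum_ncard_fiber (hfin.subset hU) c]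
  refine Finset.even_sum _ fun i _ => ?_
  rcases eq_empty_or_nonempty {u ∈ U | c u = i} with h | ⟨u, hu, rfl⟩
  · simp [h]
  have hclass : {v ∈ U | c v = c u} = {v ∈ G.neighborSet x | c v = c u} := by
    refine Set.ext fun v => ⟨fun hv => ⟨hU hv.1, hv.2⟩, fun hv => ⟨?_, hv.2⟩⟩
    by_cases hvu : v = u
    · exact hvu ▸ hu
    refine hclosed u hu ⟨hv.1, hvu, fun huv => ?_⟩
    exact hc (mem_insert_of_mem x (hU hu)) (mem_insert_of_mem x hv.1) huv hv.2.symm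
  rw [hclass, hG.clawFree.ncard_colorClass_eq hc hfin (hG.ncard_neighborSet_eq_eight hx)]
  split_ifs <;> decide

theorem missesEdge_of_adj (hG : ClawFreeDC7 G) (hx : G.MissesEdge x) (hxu : G.Adj x u) :
    G.MissesEdge u := by
  obtain ⟨v, w, hvw, hpriv⟩ := ncard_eq_two.1 (hG.ncard_privateNeighborSet_eq_two hx hxu)
  have hv : v ∈ G.privateNeighborSet x u := by simp [hpriv]
  have hw : w ∈ G.privateNeighborSet x u := by simp [hpriv]
  exact ⟨v, w, hG.clawFree.isClique_privateNeighborSet hxu hv hw hvw, hv.2.1, hw.2.1, hv.2.2,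
    hw.2.2⟩

theorem ncard_commonNeighbors_eq_five (hG : ClawFreeDC7 G) (hx : G.MissesEdge x)
    (hxu : G.Adj x u) : (G.commonNeighbors u x).ncard = 5 := by
  have := ncard_neighborSet_of_adj (hG.finite_neighborSet x) hxu
  rw [hG.ncard_neighborSet_eq_eight hx, hG.ncard_privateNeighborSet_eq_two hx hxu,
    commonNeighbors_symm] at this
  omega

theorem exists_privateNeighborSet_eq_pair (hG : ClawFreeDC7 G) (hx : G.MissesEdge x)
    (hxu : G.Adj x u) (hz : z ∈ G.privateNeighborSet u x) :
    ∃ w, G.Adj x w ∧ G.privateNeighborSet u z = {x, w} := by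
  have hu := hG.missesEdge_of_adj hx hxu
  have hxz : x ∈ G.privateNeighborSet u z := ⟨hxu.symm, hz.2.1.symm, fun h => hz.2.2 h.symm⟩
  obtain ⟨w, hw⟩ : ∃ w, G.privateNeighborSet u z \ {x} = {w} := ncard_eq_one.1 <| by
    rw [ncard_sdiff_singleton_of_mem hxz, hG.ncard_privateNeighborSet_eq_two hu hz.1]
  obtain ⟨⟨huw, hwz, hzw⟩, hwx⟩ : w ∈ G.privateNeighborSet u z \ {x} := hw ▸ rfl
  refine ⟨w, by_contra fun hxw => hzw ?_, ?_⟩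
  · exact hG.clawFree.isClique_privateNeighborSet hxu.symm hz ⟨huw, hwx, hxw⟩ hwz.symm
  · rw [← hw, insert_sdiff_singleton, insert_eq_of_mem hxz]

theorem missesEdge_of_mem_privateNeighborSet (hG : ClawFreeDC7 G) (hx : G.MissesEdge x)
    (hxu : G.Adj x u) (hz : z ∈ G.privateNeighborSet u x) : G.MissesEdge z := by
  obtain ⟨w, hxw, hpair⟩ := hG.exists_privateNeighborSet_eq_pair hx hxu hz
  have hw : w ∈ G.privateNeighborSet u z := by simp [hpair]
  exact ⟨x, w, hxw, hz.2.1.symm, hw.2.1, fun h => hz.2.2 h.symm, hw.2.2⟩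

theorem ncard_commonNeighbors_mem_Icc (hG : ClawFreeDC7 G) (hx : G.MissesEdge x)
    (hxu : G.Adj x u) (hz : z ∈ G.privateNeighborSet u x) :
    (G.commonNeighbors z x).ncard ∈ Icc 5 7 := by
  obtain ⟨w, hxw, hpair⟩ := hG.exists_privateNeighborSet_eq_pair hx hxu hz
  have hw : w ∈ G.privateNeighborSet u z := by simp [hpair]
  have hfinx := hG.finite_neighborSet x
  have hfin : (G.commonNeighbors z x).Finite := hfinx.subset inter_subset_right
  constructor
  · have hsub : insert u (G.commonNeighbors u x \ {w}) ⊆ G.commonNeighbors z x := by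
      rintro v (rfl | ⟨⟨huv, hxv⟩, hvw⟩)
      · exact ⟨hz.1.symm, hxu⟩
      refine ⟨by_contra fun hzv => ?_, hxv⟩
      have hv : v ∈ G.privateNeighborSet u z :=
        ⟨huv, fun h => hz.2.2 (h ▸ hxv), hzv⟩
      rw [hpair] at hv
      rcases hv with rfl | rfl
      · exact G.loopless.irrefl _ hxv
      · exact hvw rfl
    have h5 := hG.ncard_commonNeighbors_eq_five hx hxu
    have hfinu : (G.commonNeighbors u x).Finite := hfinx.subset inter_subset_right
    have := ncard_le_ncard hsub hfin
    rw [ncard_insert_of_notMem (fun h => G.loopless.irrefl u h.1.1) hfinu.sdiff] at this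
    have := ncard_le_ncard_sdiff_add_ncard (G.commonNeighbors u x) {w}
    rw [ncard_singleton] at this
    omega
  · have hsub : G.commonNeighbors z x ⊆ G.neighborSet x \ {w} :=
      fun v hv => ⟨hv.2, fun h => hw.2.2 ((mem_singleton_iff.1 h) ▸ hv.1)⟩
    have := ncard_le_ncard hsub hfinx.sdiff
    rw [ncard_sdiff_singleton_of_mem (show w ∈ G.neighborSet x from hxw),
      hG.ncard_neighborSet_eq_eight hx] at this
    exact this

theorem ncard_privateNeighborSet_inter_add_ncard_sdiff (hG : ClawFreeDC7 G)
    (hx : G.MissesEdge x) (hxu : G.Adj x u) (hz : z ∈ G.privateNeighborSet u x) :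
    (G.privateNeighborSet x u ∩ G.neighborSet z).ncard +
      (G.privateNeighborSet z x \ G.privateNeighborSet u x).ncard = 2 := by
  have hfin := hG.finite_neighborSet z
  have hdisj : Disjoint (G.privateNeighborSet x u ∩ G.neighborSet z)
      (G.privateNeighborSet z x \ G.privateNeighborSet u x) :=
    Set.disjoint_left.2 fun _ hw hw' => hw'.1.2.2 hw.1.1
  rw [← ncard_union_eq hdisj (hfin.subset inter_subset_right) (hfin.subset fun w hw => hw.1.1),
    ← privateNeighborSet_eq_union (fun h => hz.2.2 h.symm) hxu,
    hG.ncard_privateNeighborSet_eq_two (hG.missesEdge_of_mem_privateNeighborSet hx hxu hz)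
      hz.1.symm]

theorem privateNeighborSet_subset_neighborSet (hG : ClawFreeDC7 G) (hx : G.MissesEdge x)
    (hxu : G.Adj x u) (hz : z ∈ G.privateNeighborSet u x)
    (h : G.privateNeighborSet z x ⊆ G.privateNeighborSet u x) :
    G.privateNeighborSet x u ⊆ G.neighborSet z := by
  have := hG.ncard_privateNeighborSet_inter_add_ncard_sdiff hx hxu hz
  rw [sdiff_eq_empty.2 h, ncard_empty, add_zero,
    ← hG.ncard_privateNeighborSet_eq_two hx hxu] at this
  rw [← eq_of_subset_of_ncard_le inter_subset_left this.ge
    ((hG.finite_neighborSet x).subset (privateNeighborSet_subset x u))]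
  exact inter_subset_right

theorem ncard_privateNeighborSet_le (hG : ClawFreeDC7 G) (hx : G.MissesEdge x)
    (hxu : G.Adj x u) (hz : z ∈ G.privateNeighborSet u x) :
    (G.privateNeighborSet z x).ncard ≤
      (G.privateNeighborSet x u \ G.neighborSet z).ncard + 1 := by
  have h1 := ncard_inter_add_ncard_sdiff_eq_ncard (G.privateNeighborSet x u) (G.neighborSet z)
    ((hG.finite_neighborSet x).subset (privateNeighborSet_subset x u))
  rw [hG.ncard_privateNeighborSet_eq_two hx hxu] at h1
  have h2 := hG.ncard_privateNeighborSet_inter_add_ncard_sdiff hx hxu hz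
  have h3 := ncard_inter_add_ncard_sdiff_eq_ncard (G.privateNeighborSet z x)
    (G.privateNeighborSet u x) ((hG.finite_neighborSet z).subset (privateNeighborSet_subset z x))
  have h4 : (G.privateNeighborSet z x ∩ G.privateNeighborSet u x).ncard ≤ 1 := by
    calc _ ≤ (G.privateNeighborSet u x \ {z}).ncard :=
          ncard_le_ncard (fun w hw => ⟨hw.2, fun h => (hw.1.1 : G.Adj z w).ne' h⟩)
            ((hG.finite_neighborSet u).subset (privateNeighborSet_subset u x)).sdiff
      _ = 1 := by
          rw [ncard_sdiff_singleton_of_mem hz,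
            hG.ncard_privateNeighborSet_eq_two (hG.missesEdge_of_adj hx hxu) hxu.symm]
  omega

theorem ncard_commonNeighbors_eq_seven (hG : ClawFreeDC7 G) (hx : G.MissesEdge x)
    (hxu : G.Adj x u) (hz : z ∈ G.privateNeighborSet u x) :
    (G.commonNeighbors z x).ncard = 7 := by
  obtain ⟨h5, h7⟩ := hG.ncard_commonNeighbors_mem_Icc hx hxu hz
  have hfinx := hG.finite_neighborSet x
  have hP : (G.privateNeighborSet x z).ncard + (G.commonNeighbors z x).ncard = 8 := by
    have := ncard_neighborSet_of_not_adj hfinx hz.2.2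
    rw [hG.ncard_neighborSet_eq_eight hx, commonNeighbors_symm] at this
    omega
  have hQ : (G.privateNeighborSet z x).ncard + (G.commonNeighbors z x).ncard = 8 := by
    have := ncard_neighborSet_of_not_adj (hG.finite_neighborSet z) fun h => hz.2.2 h.symm
    rw [hG.ncard_neighborSet_eq_eight (hG.missesEdge_of_mem_privateNeighborSet hx hxu hz)] at this
    omega
  have hcount := ncard_mul_le_ncard_mul (s := G.commonNeighbors z x)
    (hfinx.subset inter_subset_right) (hfinx.subset (privateNeighborSet_subset x z))
    (fun v b => b ∈ G.privateNeighborSet x v)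
    (m := 7 - (G.commonNeighbors z x).ncard) (n := 2) ?_ ?_
  · generalize (G.commonNeighbors z x).ncard = d at *
    interval_cases d <;> omega
  · rintro v ⟨hzv, hxv⟩
    have := hG.ncard_privateNeighborSet_le hx hxv ⟨G.adj_symm hzv, hz.2.1, hz.2.2⟩
    have hsub : G.privateNeighborSet x v \ G.neighborSet z ⊆
        {b ∈ G.privateNeighborSet x z | b ∈ G.privateNeighborSet x v} :=
      fun b hb => ⟨⟨hb.1.1, fun h => hz.2.2 (h ▸ hb.1.1), hb.2⟩, hb.1⟩
    have := ncard_le_ncard hsub (hfinx.subset fun b hb => hb.1.1)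
    omega
  · intro b hb
    calc _ ≤ (G.privateNeighborSet x b).ncard :=
          ncard_le_ncard (fun v hv => ⟨hv.1.2, hv.2.2.1.symm, fun h => hv.2.2.2 h.symm⟩)
            (hfinx.subset (privateNeighborSet_subset x b))
      _ = 2 := hG.ncard_privateNeighborSet_eq_two hx hb.1

theorem exists_privateNeighborSet_eq_singleton (hG : ClawFreeDC7 G) (hx : G.MissesEdge x)
    (hxu : G.Adj x u) (hz : z ∈ G.privateNeighborSet u x) :
    ∃ t, G.privateNeighborSet z x = {t} := by
  refine ncard_eq_one.1 ?_
  have := ncard_neighborSet_of_not_adj (hG.finite_neighborSet z) fun h => hz.2.2 h.symm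
  rw [hG.ncard_neighborSet_eq_eight (hG.missesEdge_of_mem_privateNeighborSet hx hxu hz),
    hG.ncard_commonNeighbors_eq_seven hx hxu hz] at this
  omega

theorem privateNeighborSet_subset_of_eq_singleton (hG : ClawFreeDC7 G) (hx : G.MissesEdge x)
    {t : V} (hxu : G.Adj x u) (hz : z ∈ G.privateNeighborSet u x)
    (ht : G.privateNeighborSet z x = {t}) (hut : G.Adj u t) :
    G.privateNeighborSet x u ⊆ G.neighborSet z := by
  have htz : t ∈ G.privateNeighborSet z x := ht ▸ mem_singleton t
  refine hG.privateNeighborSet_subset_neighborSet hx hxu hz ?_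
  rw [ht, singleton_subset_iff]
  exact ⟨hut, htz.2.1, htz.2.2⟩

theorem not_missesEdge (hG : ClawFreeDC7 G) (x : V) : ¬ G.MissesEdge x := by
  intro hx
  obtain ⟨u, hxu⟩ := hG.exists_adj x
  obtain ⟨z, hz⟩ : (G.privateNeighborSet u x).Nonempty := nonempty_of_ncard_ne_zero <| by
    rw [hG.ncard_privateNeighborSet_eq_two (hG.missesEdge_of_adj hx hxu) hxu.symm]
    decide
  obtain ⟨t, ht⟩ := hG.exists_privateNeighborSet_eq_singleton hx hxu hz
  have htz : t ∈ G.privateNeighborSet z x := ht ▸ mem_singleton t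
  have hdiff : G.commonNeighbors z x \ G.neighborSet t = G.privateNeighborSet z t := by
    ext w
    refine ⟨fun ⟨⟨hzw, hxw⟩, htw⟩ => ⟨hzw, fun h => htz.2.2 (h ▸ hxw), htw⟩,
      fun ⟨hzw, hwt, htw⟩ => ⟨⟨hzw, by_contra fun hxw => hwt ?_⟩, htw⟩⟩
    have hw : w ∈ G.privateNeighborSet z x := ⟨hzw, fun h => hz.2.2 (h ▸ hzw).symm, hxw⟩
    rwa [ht] at hw
  have hW : (G.commonNeighbors z x ∩ G.neighborSet t).ncard = 5 := by
    have := ncard_inter_add_ncard_sdiff_eq_ncard (G.commonNeighbors z x) (G.neighborSet t)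
      ((hG.finite_neighborSet x).subset inter_subset_right)
    rw [hdiff, hG.ncard_commonNeighbors_eq_seven hx hxu hz, hG.ncard_privateNeighborSet_eq_two
      (hG.missesEdge_of_mem_privateNeighborSet hx hxu hz) htz.1] at this
    omega
  obtain ⟨v, ⟨-, hxv⟩, htv⟩ :=
    nonempty_of_ncard_ne_zero (s := G.commonNeighbors z x ∩ G.neighborSet t) (by omega)
  have hzt : G.privateNeighborSet t x = {z} := by
    obtain ⟨z', hz'⟩ := hG.exists_privateNeighborSet_eq_singleton hx hxv
      ⟨G.adj_symm htv, htz.2.1, htz.2.2⟩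
    have hz : z ∈ G.privateNeighborSet t x := ⟨htz.1.symm, hz.2.1, hz.2.2⟩
    rw [hz', mem_singleton_iff] at hz
    rwa [hz]
  refine (by decide : ¬ Even 5) (hW ▸ hG.even_ncard_of_privateNeighborSet_subset hx
    (fun w hw => hw.1.2) fun w ⟨⟨hzw, hxw⟩, htw⟩ v hv => ⟨⟨?_, hv.1⟩, ?_⟩)
  · exact hG.privateNeighborSet_subset_of_eq_singleton hx hxw ⟨G.adj_symm hzw, hz.2.1, hz.2.2⟩
      ht (G.adj_symm htw) hv
  · exact hG.privateNeighborSet_subset_of_eq_singleton hx hxw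
      ⟨G.adj_symm htw, htz.2.1, htz.2.2⟩ hzt (G.adj_symm hzw) hv

theorem eq_top (hG : ClawFreeDC7 G) : G = ⊤ := by
  ext x z
  refine ⟨Adj.ne, fun hne => by_contra fun hxz => ?_⟩
  have hN : G.neighborSet x ⊆ G.neighborSet z := fun w hxw => by_contra fun hzw =>
    hG.not_missesEdge z ⟨x, w, hxw, hne, fun h => hxz (h ▸ hxw), fun h => hxz h.symm, hzw⟩
  obtain ⟨u, hxu⟩ := hG.exists_adj x
  obtain ⟨c, hc⟩ := hG.exists_properOn hxu
  exact hG.not_colorable (colorable_succ_of_neighborSet_subset hxz hne hN hxu hc)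

end ClawFreeDC7

end SimpleGraph

theorem stmt_6 {V : Type*} (G : SimpleGraph V)
    (hG : DoubleCritical G 7) (hcf : ClawFree G) :
    Nonempty (G ≃g (⊤ : SimpleGraph (Fin 7))) := by
  obtain rfl := (ClawFreeDC7.of_doubleCritical hG hcf).eq_top
  have hV : ENat.card V = 7 := chromaticNumber_top_eq_enat_card (V := V) ▸ hG.2.1
  have : Fintype V := @Fintype.ofFinite V (ENat.card_lt_top.1 (hV ▸ by decide))
  rw [ENat.card_eq_coe_fintype_card] at hV
  exact ⟨Iso.completeGraph (Fintype.equivFinOfCardEq (by exact_mod_cast hV))⟩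
end

section
/- Let G be a graph, x a vertex of G with at least one non-neighbor, and suppose G \ N[x] is bipartite (possibly edgeless) and nonempty, and G is connected with χ(G) = t. If χ(G \ (V(H) ∪ {z})) ≤ t - 2 for an appropriate vertex z adjacent to both N(x) and H = G \ N[x] (as guaranteed for double-critical graphs), then χ(G) ≤ t - 1, a contradiction. Formally: if G is a connected graph with χ(G) = t such that χ(G \ {u,v}) = t - 2 for every edge uv, x has a non-neighbor, and G \ N[x] is 2-colorable, then a contradiction follows (i.e., G \ N[x] is not 2-colorable). -/
/-!
A colouring of a set `T ⊆ N[x]` containing `x` extends, with one new colour, to all of `G` as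
soon as the rest of `G` splits into two independent sets one of which misses `N(x)`: that set
reuses the colour of `x`. If `G \ N[x]` has an edge `pq`, colour `T = N[x]` inside `G \ {p, q}`.
Otherwise connectivity gives `z ∈ N(x)` with a neighbour `h ∉ N[x]`; colour `T = N[x] \ {z}`
inside `G \ {z, h}` and split the rest into the independent sets `{z}` and `G \ N[x]`.
Either way `G` is `(t - 1)`-colourable.
-/

open SimpleGraph

namespace SimpleGraph

variable {V : Type*} {G : SimpleGraph V}

theorem colorable_add_one_of_subset_closedNbhd {x : V} {T : Set V} {k : ℕ}
    (hxT : x ∈ T) (hT : T ⊆ insert x (G.neighborSet x)) (hc : (G.induce T).Colorable k)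
    (b : (G.induce Tᶜ).Coloring Bool) (hb : ∀ w (hw : w ∈ Tᶜ), G.Adj x w → b ⟨w, hw⟩ = true) :
    G.Colorable (k + 1) := by
  classical
  obtain ⟨c⟩ := hc
  -- `none` is the new colour; the vertices outside `T` with `b = false` reuse the colour of `x`.
  let f : V → Option (Fin k) := fun v =>
    if hv : v ∈ T then some (c ⟨v, hv⟩) else if b ⟨v, hv⟩ then none else some (c ⟨x, hxT⟩)
  have hcross : ∀ {u w}, G.Adj u w → (hu : u ∈ T) → (hw : w ∉ T) → f u ≠ f w := by
    intro u w huw hu hw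
    by_cases hbw : b ⟨w, hw⟩
    · simp [f, hu, hw, hbw]
    · have hux : u ≠ x := by
        rintro rfl
        exact hbw (hb w hw huw)
      have hxu : G.Adj x u := (hT hu).resolve_left hux
      simpa [f, hu, hw, hbw] using
        (c.valid (G := G.induce T) (v := ⟨x, hxT⟩) (w := ⟨u, hu⟩) hxu).symm
  have hf : ∀ {u v}, G.Adj u v → f u ≠ f v := by
    intro u v huv
    by_cases hu : u ∈ T <;> by_cases hv : v ∈ T
    · simpa [f, hu, hv] using c.valid (G := G.induce T) (v := ⟨u, hu⟩) (w := ⟨v, hv⟩) huv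
    · exact hcross huv hu hv
    · exact (hcross huv.symm hv hu).symm
    · have hbuv := b.valid (G := G.induce Tᶜ) (v := ⟨u, hu⟩) (w := ⟨v, hv⟩) huv
      cases hbu : b ⟨u, hu⟩ <;> cases hbv : b ⟨v, hv⟩ <;> simp_all [f]
  simpa using (Coloring.mk f hf).colorable

theorem exists_coloring_bool_of_forall_not_adj {T : Set V} (z : V)
    (hT : ∀ p q, p ∉ T → q ∉ T → p ≠ z → q ≠ z → ¬ G.Adj p q) :
    ∃ b : (G.induce Tᶜ).Coloring Bool, ∀ w, b w = true ↔ w.1 = z := by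
  classical
  refine ⟨Coloring.mk (fun w => decide (w.1 = z)) ?_, fun w => decide_eq_true_iff⟩
  rintro ⟨u, hu⟩ ⟨v, hv⟩ huv
  simp only [ne_eq, decide_eq_decide]
  intro hiff
  by_cases huz : u = z
  · subst huz
    cases hiff.mp rfl
    exact G.irrefl huv
  · exact hT u v hu hv huz (mt hiff.mpr huz) huv

theorem chromaticNumber_ne_of_subset_closedNbhd {x : V} {T : Set V} {t : ℕ}
    (hxT : x ∈ T) (hT : T ⊆ insert x (G.neighborSet x)) (hc : (G.induce T).Colorable (t - 2))
    (b : (G.induce Tᶜ).Coloring Bool) (hb : ∀ w (hw : w ∈ Tᶜ), G.Adj x w → b ⟨w, hw⟩ = true) :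
    G.chromaticNumber ≠ t := by
  intro hchi
  have hle := (colorable_add_one_of_subset_closedNbhd hxT hT hc b hb).chromaticNumber_le
  have ht : t - 2 ≠ 0 := fun h => (colorable_zero_iff.mp (h ▸ hc)).false ⟨x, hxT⟩
  rw [hchi] at hle
  norm_cast at hle
  omega

end SimpleGraph

theorem stmt_17 {V : Type*} (G : SimpleGraph V) (t : ℕ)
    (hconn : G.Connected) (hchi : G.chromaticNumber = (t : ℕ∞))
    (hdc : ∀ u v : V, G.Adj u v →
      (G.induce ({u, v}ᶜ : Set V)).chromaticNumber = (t : ℕ∞) - 2)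
    (x : V) (hx : ∃ y : V, y ≠ x ∧ ¬ G.Adj x y) :
    ¬ (G.induce ((insert x (G.neighborSet x))ᶜ : Set V)).Colorable 2 := by
  intro hcol
  set S := insert x (G.neighborSet x)
  have hxS : x ∈ S := Set.mem_insert x _
  have hcolorable : ∀ u v, G.Adj u v → ∀ T ⊆ ({u, v}ᶜ : Set V), (G.induce T).Colorable (t - 2) :=
    fun u v huv T hT => (chromaticNumber_le_iff_colorable.mp
      (by rw [hdc u v huv, ENat.natCast_sub]; rfl)).of_hom (G.induceHomOfLE hT).toHom
  by_cases hedge : ∃ p q, p ∉ S ∧ q ∉ S ∧ G.Adj p q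
  · obtain ⟨p, q, hp, hq, hpq⟩ := hedge
    refine chromaticNumber_ne_of_subset_closedNbhd hxS subset_rfl (hcolorable p q hpq S ?_)
      (hcol.toColoring (by simp)) (fun w hw hxw => absurd (Or.inr hxw) hw) hchi
    rintro v hv (rfl | rfl)
    exacts [hp hv, hq hv]
  · push Not at hedge
    obtain ⟨y, hyx, hxy⟩ := hx
    obtain ⟨⟨⟨z, h⟩, hzh⟩, -, -, hhS⟩ := (hconn.preconnected x y).some.exists_boundary_dart S hxS
      (by simp [S, hyx, hxy])
    have hzx : z ≠ x := by
      rintro rfl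
      exact hhS (Or.inr hzh)
    obtain ⟨b, hb⟩ := exists_coloring_bool_of_forall_not_adj (G := G) (T := S \ {z}) z
      fun p q hp hq hpz hqz => hedge p q (fun h => hp ⟨h, hpz⟩) (fun h => hq ⟨h, hqz⟩)
    refine chromaticNumber_ne_of_subset_closedNbhd (T := S \ {z}) ⟨hxS, hzx.symm⟩ Set.sdiff_subset
      (hcolorable z h hzh _ ?_) b
      (fun w hw hxw => (hb _).mpr (by_contra fun hwz => hw ⟨Or.inr hxw, hwz⟩)) hchi
    rintro v ⟨hvS, hvz⟩ (rfl | rfl)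
    exacts [hvz rfl, hhS hvS]
end
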